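/- arXiv:2111.01027 — 5 statements merged into one kernel-verified Lean document; each statement's English description precedes it below -/
import Mathlib

section
/- Let N ∈ ℕ. There exist a constant C_sum > 0, a number ε > 0, and sets K_n = {k_1^n, …, k_9^n} ⊂ S² ∩ ℚ³ of nine distinct unit vectors with rational coordinates, indexed by n ∈ {0, …, N}, such that: (i) if n₁ ≠ n₂ then K_{n₁} ∩ K_{n₂} = ∅; and (ii) for every n ∈ {0, …, N} there exist functions c_1^n, …, c_9^n, each smooth and strictly positive on the set of symmetric traceless real 3×3 matrices R with ‖R‖ ≤ ε, such that for every such R one has ∑_{i=1}^9 (c_i^n(R))² (3 k_i^n ⊗ k_i^n − Id) = R and ∑_{i=1}^9 (c_i^n(R))² = C_sum. -/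
open Matrix

attribute [local instance] Matrix.normedAddCommGroup Matrix.normedSpace

set_option maxHeartbeats 1000000

noncomputable def aa (t : ℝ) : ℝ := (1 - t^2)/(1 + t^2)
noncomputable def bb (t : ℝ) : ℝ := 2*t/(1 + t^2)

noncomputable def vv : Fin 9 → Fin 3 → ℝ :=
  ![![4/9, -8/9, 1/9], ![7/9, 4/9, 4/9], ![-4/9, -1/9, 8/9], ![8/9, -4/9, -1/9],
    ![-4/9, -7/9, -4/9], ![1/9, 4/9, -8/9], ![2/3, -2/3, 1/3], ![-2/3, -1/3, 2/3],
    ![-1/3, -2/3, -2/3]]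

def vq : Fin 9 → Fin 3 → ℚ :=
  ![![4/9, -8/9, 1/9], ![7/9, 4/9, 4/9], ![-4/9, -1/9, 8/9], ![8/9, -4/9, -1/9],
    ![-4/9, -7/9, -4/9], ![1/9, 4/9, -8/9], ![2/3, -2/3, 1/3], ![-2/3, -1/3, 2/3],
    ![-1/3, -2/3, -2/3]]

noncomputable def kk (t : ℝ) (i : Fin 9) : Fin 3 → ℝ :=
  ![aa t * vv i 0 - bb t * vv i 1, bb t * vv i 0 + aa t * vv i 1, vv i 2]

def kq (t : ℚ) (i : Fin 9) : Fin 3 → ℚ :=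
  ![(1 - t^2)/(1 + t^2) * vq i 0 - 2*t/(1 + t^2) * vq i 1,
    2*t/(1 + t^2) * vq i 0 + (1 - t^2)/(1 + t^2) * vq i 1, vq i 2]

lemma vv_cast (i : Fin 9) (j : Fin 3) : ((vq i j : ℚ) : ℝ) = vv i j := by
  fin_cases i <;> fin_cases j <;> norm_num [vq, vv]

lemma kq_cast (n : ℕ) (i : Fin 9) (j : Fin 3) :
    ((kq (n : ℚ) i j : ℚ) : ℝ) = kk (n : ℝ) i j := by
  fin_cases j
  · show ((((1 - (n:ℚ)^2)/(1 + (n:ℚ)^2) * vq i 0 - 2*(n:ℚ)/(1 + (n:ℚ)^2) * vq i 1 : ℚ)) : ℝ)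
      = aa (n:ℝ) * vv i 0 - bb (n:ℝ) * vv i 1
    rw [aa, bb]; push_cast [← vv_cast]; ring
  · show ((((2*(n:ℚ)/(1 + (n:ℚ)^2) * vq i 0 + (1 - (n:ℚ)^2)/(1 + (n:ℚ)^2) * vq i 1 : ℚ)) : ℝ)
      = bb (n:ℝ) * vv i 0 + aa (n:ℝ) * vv i 1)
    rw [aa, bb]; push_cast [← vv_cast]; ring
  · exact vv_cast i 2

def zq : Fin 9 → ℤ := ![5, 20, 40, -5, -20, -40, 15, 30, -30]

lemma vv_z (i : Fin 9) : vv i 2 = (zq i : ℝ)/45 := by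
  fin_cases i <;> norm_num [vv, zq, Matrix.cons_val_two, Matrix.tail_cons, Matrix.head_cons]

lemma zq_inj : Function.Injective zq := by decide

lemma vz_inj : ∀ i j : Fin 9, vv i 2 = vv j 2 → i = j := by
  intro i j h
  rw [vv_z, vv_z, div_eq_div_iff (by norm_num) (by norm_num)] at h
  exact zq_inj (by exact_mod_cast mul_right_cancel₀ (by norm_num : (45:ℝ) ≠ 0) h)

lemma kk_inj (t : ℝ) : Function.Injective (kk t) := by
  intro i j h
  exact vz_inj i j (by simpa [kk] using congrFun h 2)

lemma rot_inj (t₁ t₂ x y : ℝ) (h₁ : 0 ≤ t₁) (h₂ : 0 ≤ t₂) (hxy : x^2 + y^2 ≠ 0)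
    (h0 : aa t₁ * x - bb t₁ * y = aa t₂ * x - bb t₂ * y)
    (h1 : bb t₁ * x + aa t₁ * y = bb t₂ * x + aa t₂ * y) : t₁ = t₂ := by
  have e1 : (aa t₁ - aa t₂) * x = (bb t₁ - bb t₂) * y := by linarith [h0]
  have e2 : (bb t₁ - bb t₂) * x = -((aa t₁ - aa t₂) * y) := by linarith [h1]
  have key : (aa t₁ - aa t₂) * (x^2 + y^2) = 0 := by linear_combination x * e1 + y * e2
  have ha : aa t₁ = aa t₂ := by
    rcases mul_eq_zero.1 key with h | h
    · linarith [h]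
    · exact absurd h hxy
  have d₁ : (1 + t₁^2) ≠ 0 := by positivity
  have d₂ : (1 + t₂^2) ≠ 0 := by positivity
  rw [aa, aa, div_eq_div_iff d₁ d₂] at ha
  have hsq : t₁^2 = t₂^2 := by nlinarith [ha]
  nlinarith [hsq, h₁, h₂]

noncomputable def LL : Fin 9 → Fin 5 → ℝ :=
  ![![233/6430, -171/6430, -399/2572, 2703/6430, -179/2572],
    ![561/2572, 1089/5144, 765/2572, -231/2572, -411/2572],
    ![-3271/12860, -4761/25720, -183/1286, -4251/12860, 295/1286],
    ![217/1286, -150/643, -285/2572, -165/1286, 607/2572],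
    ![201/2572, 1071/5144, -63/643, 825/2572, 45/1286],
    ![-635/2572, 129/5144, 537/2572, -495/2572, -697/2572],
    ![-16/3215, -901/6430, 171/643, -296/3215, -107/643],
    ![1937/6430, 3987/12860, -407/1286, 2077/6430, -134/643],
    ![-381/1286, -437/2572, 65/1286, -297/1286, 241/643]]

noncomputable def QQ (t : ℝ) : Fin 3 → Fin 3 → ℝ :=
  ![![aa t, -bb t, 0], ![bb t, aa t, 0], ![0, 0, 1]]

noncomputable def SS (t : ℝ) (R : Matrix (Fin 3) (Fin 3) ℝ) (p q : Fin 3) : ℝ :=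
  ∑ u, ∑ v, QQ t u p * R u v * QQ t v q

noncomputable def xx (t : ℝ) (i : Fin 9) (R : Matrix (Fin 3) (Fin 3) ℝ) : ℝ :=
  1 + LL i 0 * SS t R 0 0 + LL i 1 * SS t R 0 1 + LL i 2 * SS t R 0 2
    + LL i 3 * SS t R 1 1 + LL i 4 * SS t R 1 2

noncomputable def cc (t : ℝ) (i : Fin 9) (R : Matrix (Fin 3) (Fin 3) ℝ) : ℝ :=
  Real.sqrt (xx t i R)

lemma aa_abs (t : ℝ) : |aa t| ≤ 1 := by
  rw [aa, abs_div, abs_of_pos (by positivity : (0:ℝ) < 1 + t^2), div_le_one (by positivity)]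
  rw [abs_le]; constructor <;> nlinarith [sq_nonneg t]

lemma bb_abs (t : ℝ) : |bb t| ≤ 1 := by
  rw [bb, abs_div, abs_of_pos (by positivity : (0:ℝ) < 1 + t^2), div_le_one (by positivity)]
  rw [abs_le]; constructor <;> nlinarith [sq_nonneg (t-1), sq_nonneg (t+1)]

lemma QQ_abs (t : ℝ) (p q : Fin 3) : |QQ t p q| ≤ 1 := by
  fin_cases p <;> fin_cases q <;>
    simp [QQ] <;> first | exact aa_abs t | exact bb_abs t | norm_num

lemma SS_abs (t : ℝ) (R : Matrix (Fin 3) (Fin 3) ℝ) (hR : ‖R‖ ≤ 1/100) (p q : Fin 3) :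
    |SS t R p q| ≤ 9/100 := by
  have hent : ∀ u v : Fin 3, |R u v| ≤ 1/100 := fun u v =>
    le_trans (Matrix.norm_entry_le_entrywise_sup_norm R) hR
  calc |SS t R p q| ≤ ∑ u, |∑ v, QQ t u p * R u v * QQ t v q| :=
        Finset.abs_sum_le_sum_abs _ _
    _ ≤ ∑ u : Fin 3, ∑ v, |QQ t u p * R u v * QQ t v q| :=
        Finset.sum_le_sum fun u _ => Finset.abs_sum_le_sum_abs _ _
    _ ≤ ∑ u : Fin 3, ∑ v : Fin 3, (1/100 : ℝ) := by
        refine Finset.sum_le_sum fun u _ => Finset.sum_le_sum fun v _ => ?_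
        rw [abs_mul, abs_mul]
        calc |QQ t u p| * |R u v| * |QQ t v q| ≤ 1 * (1/100) * 1 :=
              mul_le_mul (mul_le_mul (QQ_abs t u p) (hent u v) (abs_nonneg _) zero_le_one)
                (QQ_abs t v q) (abs_nonneg _) (by norm_num)
          _ = 1/100 := by norm_num
    _ = 9/100 := by simp; norm_num

lemma LL_abs (i : Fin 9) (m : Fin 5) : |LL i m| ≤ 1 := by
  rw [abs_le]
  fin_cases i <;> fin_cases m <;> constructor <;> norm_num [LL]

lemma hterm (l s : ℝ) (hl : |l| ≤ 1) (hs : |s| ≤ 9/100) : -(9/100) ≤ l * s := by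
  rw [abs_le] at hl hs; nlinarith

lemma xx_lb (t : ℝ) (i : Fin 9) (R : Matrix (Fin 3) (Fin 3) ℝ) (hR : ‖R‖ ≤ 1/100) :
    11/20 ≤ xx t i R := by
  have h0 := hterm _ _ (LL_abs i 0) (SS_abs t R hR 0 0)
  have h1 := hterm _ _ (LL_abs i 1) (SS_abs t R hR 0 1)
  have h2 := hterm _ _ (LL_abs i 2) (SS_abs t R hR 0 2)
  have h3 := hterm _ _ (LL_abs i 3) (SS_abs t R hR 1 1)
  have h4 := hterm _ _ (LL_abs i 4) (SS_abs t R hR 1 2)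
  rw [xx]; linarith

lemma xx_smooth (t : ℝ) (i : Fin 9) : ContDiff ℝ (⊤ : ℕ∞) (fun R => xx t i R) := by
  have hent : ∀ u v : Fin 3, ContDiff ℝ (⊤ : ℕ∞) (fun R : Matrix (Fin 3) (Fin 3) ℝ => R u v) :=
    fun u v => contDiff_apply_apply ℝ ℝ u v
  have hS : ∀ p q : Fin 3, ContDiff ℝ (⊤ : ℕ∞) (fun R => SS t R p q) := by
    intro p q
    unfold SS
    exact ContDiff.sum fun u _ => ContDiff.sum fun v _ =>
      (contDiff_const.mul (hent u v)).mul contDiff_const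
  unfold xx
  exact ((((contDiff_const.add (contDiff_const.mul (hS 0 0))).add
      (contDiff_const.mul (hS 0 1))).add (contDiff_const.mul (hS 0 2))).add
      (contDiff_const.mul (hS 1 1))).add (contDiff_const.mul (hS 1 2))

lemma cc_smooth (t : ℝ) (i : Fin 9) :
    ContDiffOn ℝ (⊤ : ℕ∞) (cc t i)
      {R : Matrix (Fin 3) (Fin 3) ℝ | R.IsSymm ∧ R.trace = 0 ∧ ‖R‖ ≤ 1/100} := by
  intro R hR
  obtain ⟨-, -, hnorm⟩ := hR
  have hpos : (0:ℝ) < xx t i R := lt_of_lt_of_le (by norm_num) (xx_lb t i R hnorm)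
  exact ((Real.contDiffAt_sqrt (ne_of_gt hpos)).comp R (xx_smooth t i).contDiffAt).contDiffWithinAt

lemma cc_pos (t : ℝ) (i : Fin 9) (R : Matrix (Fin 3) (Fin 3) ℝ) (hnorm : ‖R‖ ≤ 1/100) :
    0 < cc t i R :=
  Real.sqrt_pos.2 (lt_of_lt_of_le (by norm_num) (xx_lb t i R hnorm))

lemma cc_sq (t : ℝ) (i : Fin 9) (R : Matrix (Fin 3) (Fin 3) ℝ) (hnorm : ‖R‖ ≤ 1/100) :
    (cc t i R)^2 = xx t i R :=
  Real.sq_sqrt (le_trans (by norm_num) (xx_lb t i R hnorm))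

lemma kk_unit (n : ℕ) (i : Fin 9) : (∑ j, (kk (n : ℝ) i j) ^ 2) = 1 := by
  have ht : (1:ℝ) + (n:ℝ)^2 ≠ 0 := by positivity
  have hab : aa (n:ℝ)^2 + bb (n:ℝ)^2 = 1 := by rw [aa, bb]; field_simp; ring
  have hv : vv i 0 ^2 + vv i 1 ^2 + vv i 2 ^2 = 1 := by
    fin_cases i <;> norm_num [vv, Matrix.cons_val_two, Matrix.tail_cons, Matrix.head_cons]
  rw [Fin.sum_univ_three]
  show (aa _ * vv i 0 - bb _ * vv i 1)^2 + (bb _ * vv i 0 + aa _ * vv i 1)^2 + vv i 2 ^2 = 1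
  linear_combination (vv i 0 ^2 + vv i 1 ^2) * hab + hv

lemma sum_xx (t : ℝ) (R : Matrix (Fin 3) (Fin 3) ℝ) : ∑ i, xx t i R = 9 := by
  simp only [Fin.sum_univ_succ, Fin.sum_univ_zero, xx, LL, Matrix.cons_val_zero,
    Matrix.cons_val_one, Matrix.head_cons, Matrix.cons_val_succ, Matrix.cons_val_two,
    Matrix.cons_val_three, Matrix.cons_val_four, Matrix.vecTail, Matrix.vecHead,
    Function.comp]
  ring

lemma main_id (t : ℝ) (R : Matrix (Fin 3) (Fin 3) ℝ) (hs : R.IsSymm) (htr : R.trace = 0) :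
    (∑ i, xx t i R • ((3:ℝ) • vecMulVec (kk t i) (kk t i) - 1)) = R := by
  have h10 : R 1 0 = R 0 1 := hs.apply 0 1
  have h20 : R 2 0 = R 0 2 := hs.apply 0 2
  have h21 : R 2 1 = R 1 2 := hs.apply 1 2
  have h22 : R 2 2 = -R 0 0 - R 1 1 := by rw [Matrix.trace_fin_three] at htr; linarith
  have hab : (aa t)^2 + (bb t)^2 = 1 := by
    have ht : (1:ℝ) + t^2 ≠ 0 := by positivity
    rw [aa, bb]; field_simp; ring
  ext p q
  fin_cases p <;> fin_cases q
  · show (∑ i, xx t i R • ((3:ℝ) • vecMulVec (kk t i) (kk t i) - 1)) 0 0 = R 0 0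
    simp only [Matrix.sum_apply, Matrix.smul_apply, Matrix.sub_apply, Matrix.one_apply,
      Matrix.vecMulVec_apply, smul_eq_mul, Fin.sum_univ_succ, Fin.sum_univ_zero,
      Fin.sum_univ_three, xx, SS, QQ, LL, kk, vv, Matrix.cons_val_zero,
      Matrix.cons_val_one, Matrix.head_cons, Matrix.cons_val_succ, Matrix.cons_val_two,
      Matrix.cons_val_three, Matrix.cons_val_four, Matrix.vecTail, Matrix.vecHead,
      Function.comp, Fin.reduceEq, reduceIte, h10, h20, h21, h22]
    try simp only [Fin.succ_zero_eq_one, Fin.succ_one_eq_two, h10, h20, h21, h22]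
    linear_combination (9 + (R 0 0) + (bb t)^2*(R 0 0) + (aa t)^2*(R 0 0)) * hab
  · show (∑ i, xx t i R • ((3:ℝ) • vecMulVec (kk t i) (kk t i) - 1)) 0 1 = R 0 1
    simp only [Matrix.sum_apply, Matrix.smul_apply, Matrix.sub_apply, Matrix.one_apply,
      Matrix.vecMulVec_apply, smul_eq_mul, Fin.sum_univ_succ, Fin.sum_univ_zero,
      Fin.sum_univ_three, xx, SS, QQ, LL, kk, vv, Matrix.cons_val_zero,
      Matrix.cons_val_one, Matrix.head_cons, Matrix.cons_val_succ, Matrix.cons_val_two,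
      Matrix.cons_val_three, Matrix.cons_val_four, Matrix.vecTail, Matrix.vecHead,
      Function.comp, Fin.reduceEq, reduceIte, h10, h20, h21, h22]
    try simp only [Fin.succ_zero_eq_one, Fin.succ_one_eq_two, h10, h20, h21, h22]
    linear_combination ((R 0 1) + (bb t)^2*(R 0 1) + (aa t)^2*(R 0 1)) * hab
  · show (∑ i, xx t i R • ((3:ℝ) • vecMulVec (kk t i) (kk t i) - 1)) 0 2 = R 0 2
    simp only [Matrix.sum_apply, Matrix.smul_apply, Matrix.sub_apply, Matrix.one_apply,
      Matrix.vecMulVec_apply, smul_eq_mul, Fin.sum_univ_succ, Fin.sum_univ_zero,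
      Fin.sum_univ_three, xx, SS, QQ, LL, kk, vv, Matrix.cons_val_zero,
      Matrix.cons_val_one, Matrix.head_cons, Matrix.cons_val_succ, Matrix.cons_val_two,
      Matrix.cons_val_three, Matrix.cons_val_four, Matrix.vecTail, Matrix.vecHead,
      Function.comp, Fin.reduceEq, reduceIte, h10, h20, h21, h22]
    try simp only [Fin.succ_zero_eq_one, Fin.succ_one_eq_two, h10, h20, h21, h22]
    linear_combination ((R 0 2)) * hab
  · show (∑ i, xx t i R • ((3:ℝ) • vecMulVec (kk t i) (kk t i) - 1)) 1 0 = R 1 0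
    simp only [Matrix.sum_apply, Matrix.smul_apply, Matrix.sub_apply, Matrix.one_apply,
      Matrix.vecMulVec_apply, smul_eq_mul, Fin.sum_univ_succ, Fin.sum_univ_zero,
      Fin.sum_univ_three, xx, SS, QQ, LL, kk, vv, Matrix.cons_val_zero,
      Matrix.cons_val_one, Matrix.head_cons, Matrix.cons_val_succ, Matrix.cons_val_two,
      Matrix.cons_val_three, Matrix.cons_val_four, Matrix.vecTail, Matrix.vecHead,
      Function.comp, Fin.reduceEq, reduceIte, h10, h20, h21, h22]
    try simp only [Fin.succ_zero_eq_one, Fin.succ_one_eq_two, h10, h20, h21, h22]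
    linear_combination ((R 0 1) + (bb t)^2*(R 0 1) + (aa t)^2*(R 0 1)) * hab
  · show (∑ i, xx t i R • ((3:ℝ) • vecMulVec (kk t i) (kk t i) - 1)) 1 1 = R 1 1
    simp only [Matrix.sum_apply, Matrix.smul_apply, Matrix.sub_apply, Matrix.one_apply,
      Matrix.vecMulVec_apply, smul_eq_mul, Fin.sum_univ_succ, Fin.sum_univ_zero,
      Fin.sum_univ_three, xx, SS, QQ, LL, kk, vv, Matrix.cons_val_zero,
      Matrix.cons_val_one, Matrix.head_cons, Matrix.cons_val_succ, Matrix.cons_val_two,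
      Matrix.cons_val_three, Matrix.cons_val_four, Matrix.vecTail, Matrix.vecHead,
      Function.comp, Fin.reduceEq, reduceIte, h10, h20, h21, h22]
    try simp only [Fin.succ_zero_eq_one, Fin.succ_one_eq_two, h10, h20, h21, h22]
    linear_combination (9 + (R 1 1) + (bb t)^2*(R 1 1) + (aa t)^2*(R 1 1)) * hab
  · show (∑ i, xx t i R • ((3:ℝ) • vecMulVec (kk t i) (kk t i) - 1)) 1 2 = R 1 2
    simp only [Matrix.sum_apply, Matrix.smul_apply, Matrix.sub_apply, Matrix.one_apply,
      Matrix.vecMulVec_apply, smul_eq_mul, Fin.sum_univ_succ, Fin.sum_univ_zero,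
      Fin.sum_univ_three, xx, SS, QQ, LL, kk, vv, Matrix.cons_val_zero,
      Matrix.cons_val_one, Matrix.head_cons, Matrix.cons_val_succ, Matrix.cons_val_two,
      Matrix.cons_val_three, Matrix.cons_val_four, Matrix.vecTail, Matrix.vecHead,
      Function.comp, Fin.reduceEq, reduceIte, h10, h20, h21, h22]
    try simp only [Fin.succ_zero_eq_one, Fin.succ_one_eq_two, h10, h20, h21, h22]
    linear_combination ((R 1 2)) * hab
  · show (∑ i, xx t i R • ((3:ℝ) • vecMulVec (kk t i) (kk t i) - 1)) 2 0 = R 2 0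
    simp only [Matrix.sum_apply, Matrix.smul_apply, Matrix.sub_apply, Matrix.one_apply,
      Matrix.vecMulVec_apply, smul_eq_mul, Fin.sum_univ_succ, Fin.sum_univ_zero,
      Fin.sum_univ_three, xx, SS, QQ, LL, kk, vv, Matrix.cons_val_zero,
      Matrix.cons_val_one, Matrix.head_cons, Matrix.cons_val_succ, Matrix.cons_val_two,
      Matrix.cons_val_three, Matrix.cons_val_four, Matrix.vecTail, Matrix.vecHead,
      Function.comp, Fin.reduceEq, reduceIte, h10, h20, h21, h22]
    try simp only [Fin.succ_zero_eq_one, Fin.succ_one_eq_two, h10, h20, h21, h22]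
    linear_combination ((R 0 2)) * hab
  · show (∑ i, xx t i R • ((3:ℝ) • vecMulVec (kk t i) (kk t i) - 1)) 2 1 = R 2 1
    simp only [Matrix.sum_apply, Matrix.smul_apply, Matrix.sub_apply, Matrix.one_apply,
      Matrix.vecMulVec_apply, smul_eq_mul, Fin.sum_univ_succ, Fin.sum_univ_zero,
      Fin.sum_univ_three, xx, SS, QQ, LL, kk, vv, Matrix.cons_val_zero,
      Matrix.cons_val_one, Matrix.head_cons, Matrix.cons_val_succ, Matrix.cons_val_two,
      Matrix.cons_val_three, Matrix.cons_val_four, Matrix.vecTail, Matrix.vecHead,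
      Function.comp, Fin.reduceEq, reduceIte, h10, h20, h21, h22]
    try simp only [Fin.succ_zero_eq_one, Fin.succ_one_eq_two, h10, h20, h21, h22]
    linear_combination ((R 1 2)) * hab
  · show (∑ i, xx t i R • ((3:ℝ) • vecMulVec (kk t i) (kk t i) - 1)) 2 2 = R 2 2
    simp only [Matrix.sum_apply, Matrix.smul_apply, Matrix.sub_apply, Matrix.one_apply,
      Matrix.vecMulVec_apply, smul_eq_mul, Fin.sum_univ_succ, Fin.sum_univ_zero,
      Fin.sum_univ_three, xx, SS, QQ, LL, kk, vv, Matrix.cons_val_zero,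
      Matrix.cons_val_one, Matrix.head_cons, Matrix.cons_val_succ, Matrix.cons_val_two,
      Matrix.cons_val_three, Matrix.cons_val_four, Matrix.vecTail, Matrix.vecHead,
      Function.comp, Fin.reduceEq, reduceIte, h10, h20, h21, h22]
    try simp only [Fin.succ_zero_eq_one, Fin.succ_one_eq_two, h10, h20, h21, h22]
    linear_combination ((-1)*(R 1 1) + (-1)*(R 0 0)) * hab

lemma kk_cross (t₁ t₂ : ℝ) (h₁ : 0 ≤ t₁) (h₂ : 0 ≤ t₂) (hne : t₁ ≠ t₂) (i j : Fin 9) :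
    kk t₁ i ≠ kk t₂ j := by
  intro h
  have hij : i = j := vz_inj i j (by simpa [kk] using congrFun h 2)
  subst hij
  have h0 := congrFun h 0
  have h1 := congrFun h 1
  simp only [kk, Matrix.cons_val_zero, Matrix.cons_val_one, Matrix.head_cons] at h0 h1
  have hx : vv i 0 ^ 2 + vv i 1 ^ 2 ≠ 0 := by fin_cases i <;> norm_num [vv]
  exact hne (rot_inj t₁ t₂ (vv i 0) (vv i 1) h₁ h₂ hx h0 h1)

/-- **Linear algebra lemma.** For every `N` there exist a constant `C_sum > 0`, an `ε > 0`,
and disjoint sets `K_n = {k 0, …, k 8}` (for `n = 0, …, N`) of nine distinct rational unit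
vectors in `ℝ³`, such that every symmetric traceless `3×3` matrix `R` with `‖R‖ ≤ ε` can be
written as `∑ i (c_i^n(R))² (3 kᵢⁿ ⊗ kᵢⁿ − Id)` with the coefficient functions `c_i^n` smooth
and strictly positive, and with `∑ i (c_i^n(R))² = C_sum`. -/
theorem statement0 (N : ℕ) :
    ∃ Csum ε : ℝ, 0 < Csum ∧ 0 < ε ∧
      ∃ k : Fin (N + 1) → Fin 9 → (Fin 3 → ℝ),
        (∀ n i, (∑ j, (k n i j) ^ 2) = 1) ∧
        (∀ n i j, ∃ q : ℚ, k n i j = (q : ℝ)) ∧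
        (∀ n, Function.Injective (k n)) ∧
        (∀ n₁ n₂, n₁ ≠ n₂ → ∀ i j, k n₁ i ≠ k n₂ j) ∧
        (∀ n, ∃ c : Fin 9 → Matrix (Fin 3) (Fin 3) ℝ → ℝ,
          (∀ i, ContDiffOn ℝ (⊤ : ℕ∞) (c i)
            {R : Matrix (Fin 3) (Fin 3) ℝ | R.IsSymm ∧ R.trace = 0 ∧ ‖R‖ ≤ ε}) ∧
          (∀ i (R : Matrix (Fin 3) (Fin 3) ℝ),
            R.IsSymm → R.trace = 0 → ‖R‖ ≤ ε → 0 < c i R) ∧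
          (∀ R : Matrix (Fin 3) (Fin 3) ℝ, R.IsSymm → R.trace = 0 → ‖R‖ ≤ ε →
            (∑ i, (c i R) ^ 2 • ((3 : ℝ) • vecMulVec (k n i) (k n i) - 1)) = R ∧
            (∑ i, (c i R) ^ 2) = Csum)) := by
  refine ⟨9, 1/100, by norm_num, by norm_num, fun n i => kk ((n : ℕ) : ℝ) i,
    fun n i => kk_unit (n : ℕ) i,
    fun n i j => ⟨kq ((n : ℕ) : ℚ) i j, (kq_cast (n : ℕ) i j).symm⟩,
    fun n => kk_inj _,
    fun n₁ n₂ hne i j => kk_cross _ _ (Nat.cast_nonneg _) (Nat.cast_nonneg _)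
      (fun hc => hne (Fin.ext (Nat.cast_injective hc))) i j,
    fun n => ⟨fun i R => cc ((n : ℕ) : ℝ) i R,
      fun i => cc_smooth _ i,
      fun i R _ _ h3 => cc_pos _ i R h3, ?_⟩⟩
  intro R h1 h2 h3
  have hsq : ∀ i : Fin 9, (cc ((n : ℕ) : ℝ) i R) ^ 2 = xx ((n : ℕ) : ℝ) i R :=
    fun i => cc_sq _ i R h3
  constructor
  · rw [Finset.sum_congr rfl (fun i _ => by rw [hsq i] :
      ∀ i ∈ Finset.univ, (cc ((n : ℕ) : ℝ) i R) ^ 2 • ((3:ℝ) • vecMulVec (kk ((n : ℕ) : ℝ) i) (kk ((n : ℕ) : ℝ) i) - 1)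
        = xx ((n : ℕ) : ℝ) i R • ((3:ℝ) • vecMulVec (kk ((n : ℕ) : ℝ) i) (kk ((n : ℕ) : ℝ) i) - 1))]
    exact main_id _ R h1 h2
  · rw [Finset.sum_congr rfl (fun i _ => hsq i)]
    exact sum_xx _ R
end

section
/- Let e₁, e₂, e₃ be the standard basis of ℝ³ and consider the five unit vectors k₁ = e₁, k₂ = e₂, k₄ = (3e₁ + 4e₂)/5, k₅ = (3e₁ + 4e₃)/5, k₆ = (3e₂ + 4e₃)/5. Then the five matrices 3 k_i ⊗ k_i − Id (i ∈ {1, 2, 4, 5, 6}) are linearly independent in the space of real 3×3 matrices; since the space of symmetric traceless 3×3 real matrices is 5-dimensional, they form a basis of that space, i.e., every symmetric traceless real 3×3 matrix is a unique real linear combination of these five matrices. -/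
open Matrix

set_option maxHeartbeats 1000000 in
/-- The five matrices `3 kᵢ ⊗ kᵢ − Id`, for `k₁ = e₁`, `k₂ = e₂`, `k₄ = (3e₁+4e₂)/5`,
`k₅ = (3e₁+4e₃)/5`, `k₆ = (3e₂+4e₃)/5`, are linearly independent, and every symmetric
traceless real `3×3` matrix is a unique real linear combination of them. -/
theorem statement1
    (k : Fin 5 → Fin 3 → ℝ)
    (hk : k = ![![1, 0, 0], ![0, 1, 0], ![3/5, 4/5, 0], ![3/5, 0, 4/5], ![0, 3/5, 4/5]])
    (f : Fin 5 → Matrix (Fin 3) (Fin 3) ℝ)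
    (hf : ∀ i, f i = (3 : ℝ) • vecMulVec (k i) (k i) - 1) :
    LinearIndependent ℝ f ∧
      ∀ R : Matrix (Fin 3) (Fin 3) ℝ, R.IsSymm → R.trace = 0 →
        ∃! c : Fin 5 → ℝ, (∑ i, c i • f i) = R := by
  subst hk
  have hsum : ∀ (g : Fin 5 → ℝ), (∑ i, g i • f i) =
      Matrix.of ![![2*g 0 - g 1 + (2/25)*g 2 + (2/25)*g 3 - g 4,
                    (36/25)*g 2, (36/25)*g 3],
                  ![(36/25)*g 2, -g 0 + 2*g 1 + (23/25)*g 2 - g 3 + (2/25)*g 4,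
                    (36/25)*g 4],
                  ![(36/25)*g 3, (36/25)*g 4,
                    -g 0 - g 1 - g 2 + (23/25)*g 3 + (23/25)*g 4]] := by
    intro g
    simp only [hf]
    ext p q
    fin_cases p <;> fin_cases q <;>
      simp [Fin.sum_univ_five, vecMulVec_apply, Matrix.one_apply, Matrix.sum_apply,
        Matrix.smul_apply, Matrix.sub_apply, Matrix.vecHead, Matrix.vecTail] <;> ring
  constructor
  · rw [Fintype.linearIndependent_iff]
    intro g hg
    rw [hsum] at hg
    have h00 := congrFun (congrFun hg 0) 0
    have h11 := congrFun (congrFun hg 1) 1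
    have h01 := congrFun (congrFun hg 0) 1
    have h02 := congrFun (congrFun hg 0) 2
    have h12 := congrFun (congrFun hg 1) 2
    simp [Matrix.zero_apply] at h00 h11 h01 h02 h12
    have e2 : g 2 = 0 := by linarith
    have e3 : g 3 = 0 := by linarith
    have e4 : g 4 = 0 := by linarith
    have e0 : g 0 = 0 := by linarith
    have e1 : g 1 = 0 := by linarith
    intro i
    fin_cases i
    exacts [e0, e1, e2, e3, e4]
  · intro R hR htr
    have s10 : R 1 0 = R 0 1 := hR.apply 0 1
    have s20 : R 2 0 = R 0 2 := hR.apply 0 2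
    have s21 : R 2 1 = R 1 2 := hR.apply 1 2
    have ht : R 0 0 + R 1 1 + R 2 2 = 0 := by
      simpa [Matrix.trace, Matrix.diag, Fin.sum_univ_three] using htr
    refine ⟨![(2*(R 0 0 + 25/36 * R 1 2 - 2/36 * (R 0 1 + R 0 2))
               + (R 1 1 - 23/36 * R 0 1 + 25/36 * R 0 2 - 2/36 * R 1 2))/3,
             ((R 0 0 + 25/36 * R 1 2 - 2/36 * (R 0 1 + R 0 2))
               + 2*(R 1 1 - 23/36 * R 0 1 + 25/36 * R 0 2 - 2/36 * R 1 2))/3,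
             25/36 * R 0 1, 25/36 * R 0 2, 25/36 * R 1 2], ?_, ?_⟩
    · show (∑ i, _ • f i) = R
      rw [hsum]
      ext p q
      fin_cases p <;> fin_cases q <;>
        simp [Matrix.of_apply, Matrix.vecHead, Matrix.vecTail] <;> linarith
    · intro c hc
      rw [hsum] at hc
      have h00 := congrFun (congrFun hc 0) 0
      have h11 := congrFun (congrFun hc 1) 1
      have h01 := congrFun (congrFun hc 0) 1
      have h02 := congrFun (congrFun hc 0) 2
      have h12 := congrFun (congrFun hc 1) 2
      simp [Matrix.of_apply] at h00 h11 h01 h02 h12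
      have e2 : c 2 = 25/36 * R 0 1 := by linarith
      have e3 : c 3 = 25/36 * R 0 2 := by linarith
      have e4 : c 4 = 25/36 * R 1 2 := by linarith
      have e0 : c 0 = (2*(R 0 0 + 25/36 * R 1 2 - 2/36 * (R 0 1 + R 0 2))
               + (R 1 1 - 23/36 * R 0 1 + 25/36 * R 0 2 - 2/36 * R 1 2))/3 := by linarith
      have e1 : c 1 = ((R 0 0 + 25/36 * R 1 2 - 2/36 * (R 0 1 + R 0 2))
               + 2*(R 1 1 - 23/36 * R 0 1 + 25/36 * R 0 2 - 2/36 * R 1 2))/3 := by linarith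
      funext i
      fin_cases i <;>
        simp only [Matrix.cons_val_zero, Matrix.cons_val_one, Matrix.head_cons,
          Matrix.cons_val_two, Matrix.tail_cons, Matrix.cons_val_three, Matrix.cons_val_four] <;>
        first
          | exact e0 | exact e1 | exact e2 | exact e3 | exact e4
end

section
/- (L^p decoupling) Fix integers N_dec ≥ 1 and μ ≥ λ ≥ 1 satisfying λ^{N_dec + 4} ≤ (μ / (2π√3))^{N_dec}. Let p ∈ {1, 2} and let f : ℝ³ → ℝ be a smooth (2πℤ)³-periodic function such that max_{0 ≤ N ≤ N_dec + 4} λ^{−N} ‖D^N f‖_{L^p(𝕋³)} ≤ C_f for some constant C_f > 0. Then there exists a constant C, depending only on N_dec and not on μ, λ, f, or g, such that for every smooth (2π/μ)ℤ³-periodic function g : ℝ³ → ℝ one has ‖f g‖_{L^p(𝕋³)} ≤ C · C_f · ‖g‖_{L^p(𝕋³)}. -/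
open MeasureTheory
open scoped ENNReal

namespace Decoupling
open Set
noncomputable section

/-- directional (partial) derivative -/
def pd (i : Fin 3) (G : (Fin 3 → ℝ) → ℝ) : (Fin 3 → ℝ) → ℝ :=
  fun x => fderiv ℝ G x (Pi.single i 1)

lemma pd_contDiff {G : (Fin 3 → ℝ) → ℝ} (hG : ContDiff ℝ (⊤ : ℕ∞) G) (i : Fin 3) :
    ContDiff ℝ (⊤ : ℕ∞) (pd i G) :=
  ((contDiff_infty_iff_fderiv.mp hG).2).clm_apply contDiff_const

lemma pd_cont {G : (Fin 3 → ℝ) → ℝ} (hG : ContDiff ℝ (⊤ : ℕ∞) G) (i : Fin 3) :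
    Continuous (pd i G) := (pd_contDiff hG i).continuous

lemma norm_single_one (i : Fin 3) : ‖(Pi.single i (1:ℝ) : Fin 3 → ℝ)‖ = 1 := by
  rw [Pi.norm_single]; norm_num

lemma pdBound {G : (Fin 3 → ℝ) → ℝ} (hG : ContDiff ℝ (⊤ : ℕ∞) G) (i : Fin 3) (n : ℕ)
    (x : Fin 3 → ℝ) :
    ‖iteratedFDeriv ℝ n (pd i G) x‖ ≤ ‖iteratedFDeriv ℝ (n+1) G x‖ := by
  have h := norm_iteratedFDeriv_clm_apply_const (𝕜 := ℝ) (f := fderiv ℝ G)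
    (c := (Pi.single i 1 : Fin 3 → ℝ)) (x := x) (N := (⊤ : ℕ∞)) (n := n)
    ((contDiff_infty_iff_fderiv.mp hG).2).contDiffAt (by exact_mod_cast le_top)
  rw [norm_iteratedFDeriv_fderiv, norm_single_one, one_mul] at h
  exact h

/-- 1D: sup on an interval is bounded by average plus integral of the derivative. -/
lemma oneDim {u u' : ℝ → ℝ} (hu : ∀ t, HasDerivAt u (u' t) t) (hu' : Continuous u')
    {c ℓ : ℝ} (hℓ : 0 < ℓ) {t : ℝ} (ht : t ∈ Icc c (c + ℓ)) :
    |u t| ≤ ℓ⁻¹ * (∫ s in c..(c+ℓ), |u s|) + ∫ s in c..(c+ℓ), |u' s| := by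
  have hcont : Continuous u := by
    rw [continuous_iff_continuousAt]; exact fun s => (hu s).continuousAt
  have hle : c ≤ c + ℓ := by linarith
  obtain ⟨y, hy, hmin⟩ := isCompact_Icc.exists_isMinOn (⟨c, by simp [hℓ.le]⟩ :
      (Icc c (c+ℓ)).Nonempty) (hcont.abs.continuousOn)
  have h1 : ℓ * |u y| ≤ ∫ s in c..(c+ℓ), |u s| := by
    have := intervalIntegral.integral_mono_on hle (intervalIntegrable_const (μ := volume) (c := |u y|))
      ((hcont.abs).intervalIntegrable _ _) (fun s hs => hmin hs)
    simpa using this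
  have h1' : |u y| ≤ ℓ⁻¹ * ∫ s in c..(c+ℓ), |u s| := by
    rw [inv_mul_eq_div, le_div_iff₀' hℓ]
    exact h1
  have h2 : u t - u y = ∫ s in y..t, u' s := by
    rw [intervalIntegral.integral_eq_sub_of_hasDerivAt (fun s _ => hu s)
      ((hu'.intervalIntegrable _ _))]
  have h3 : |∫ s in y..t, u' s| ≤ ∫ s in c..(c+ℓ), |u' s| := by
    have ha : |∫ s in y..t, u' s| ≤ ∫ s in Set.uIoc y t, |u' s| := by
      simpa using intervalIntegral.norm_integral_le_integral_norm_uIoc (f := u') (a := y) (b := t)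
    have hsub : Set.uIoc y t ⊆ Ioc c (c+ℓ) := by
      rw [uIoc_eq_union]
      rintro s (hs | hs) <;> constructor <;>
        simp only [mem_Ioc] at hs <;>
        first
          | linarith [hy.1, hy.2, ht.1, ht.2, hs.1, hs.2]
    have hb : ∫ s in Set.uIoc y t, |u' s| ≤ ∫ s in Ioc c (c+ℓ), |u' s| := by
      apply setIntegral_mono_set
      · exact (hu'.abs.integrableOn_Icc).mono_set Ioc_subset_Icc_self
      · exact Filter.Eventually.of_forall (fun s => abs_nonneg _)
      · exact HasSubset.Subset.eventuallyLE hsub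
    have hc : ∫ s in Ioc c (c+ℓ), |u' s| = ∫ s in c..(c+ℓ), |u' s| := by
      rw [intervalIntegral.integral_of_le hle]
    linarith
  have : |u t| ≤ |u y| + |u t - u y| := by
    have := abs_add_le (u y) (u t - u y); simpa using this
  rw [h2] at this
  linarith


lemma hasDerivAt_update (x : Fin 3 → ℝ) (i : Fin 3) (t : ℝ) :
    HasDerivAt (fun s => Function.update x i s) (Pi.single i 1) t := by
  have hφeq : (fun s => Function.update x i s)
      = fun s => (Function.update x i 0 + s • (Pi.single i 1 : Fin 3 → ℝ)) := by
    funext s j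
    by_cases h : j = i
    · subst h; simp
    · simp [Function.update_of_ne h, Pi.single_eq_of_ne h]
  rw [hφeq]
  simpa using ((hasDerivAt_id t).smul_const (Pi.single i 1 : Fin 3 → ℝ)).const_add
    (Function.update x i 0)

lemma hasDerivAt_comp_update {G : (Fin 3 → ℝ) → ℝ} (hG : ContDiff ℝ (⊤ : ℕ∞) G)
    (x : Fin 3 → ℝ) (i : Fin 3) (t : ℝ) :
    HasDerivAt (fun s => G (Function.update x i s)) (pd i G (Function.update x i t)) t := by
  have hdiff : HasFDerivAt G (fderiv ℝ G (Function.update x i t)) (Function.update x i t) :=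
    (hG.differentiable (by simp) (Function.update x i t)).hasFDerivAt
  exact hdiff.comp_hasDerivAt t (hasDerivAt_update x i t)

/-- the 1D slice bound, in `lintegral` form -/
lemma slice {G : (Fin 3 → ℝ) → ℝ} (hG : ContDiff ℝ (⊤ : ℕ∞) G) (i : Fin 3) {c ℓ : ℝ}
    (hℓ : 0 < ℓ) (x : Fin 3 → ℝ) (hx : x i ∈ Icc c (c + ℓ)) :
    ENNReal.ofReal |G x| ≤
      (ENNReal.ofReal ℓ)⁻¹ * (∫⁻ t in Icc c (c+ℓ), ENNReal.ofReal |G (Function.update x i t)|)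
        + ∫⁻ t in Icc c (c+ℓ), ENNReal.ofReal |pd i G (Function.update x i t)| := by
  have hle : c ≤ c + ℓ := by linarith
  have hucont : Continuous fun t => G (Function.update x i t) :=
    hG.continuous.comp (continuous_const.update i continuous_id)
  have hu'cont : Continuous fun t => pd i G (Function.update x i t) :=
    (pd_cont hG i).comp (continuous_const.update i continuous_id)
  have hL1 := oneDim (u := fun t => G (Function.update x i t))
      (u' := fun t => pd i G (Function.update x i t))
      (fun t => hasDerivAt_comp_update hG x i t) hu'cont hℓ hx
  rw [show Function.update x i (x i) = x from Function.update_eq_self i x] at hL1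
  have hA : 0 ≤ ∫ s in c..(c+ℓ), |G (Function.update x i s)| :=
    intervalIntegral.integral_nonneg hle (fun s _ => abs_nonneg _)
  -- convert interval integrals to lintegrals over `Icc`
  have conv : ∀ (H : ℝ → ℝ), Continuous H →
      ENNReal.ofReal (∫ s in c..(c+ℓ), |H s|) = ∫⁻ s in Icc c (c+ℓ), ENNReal.ofReal |H s| := by
    intro H hH
    rw [intervalIntegral.integral_of_le hle,
      ofReal_integral_eq_lintegral_ofReal
        ((hH.abs.integrableOn_Icc).mono_set Ioc_subset_Icc_self)
        (Filter.Eventually.of_forall (fun s => abs_nonneg _)),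
      Measure.restrict_congr_set Ioc_ae_eq_Icc]
  calc ENNReal.ofReal |G x|
      ≤ ENNReal.ofReal (ℓ⁻¹ * (∫ s in c..(c+ℓ), |G (Function.update x i s)|)
          + ∫ s in c..(c+ℓ), |pd i G (Function.update x i s)|) := ENNReal.ofReal_le_ofReal hL1
    _ = ENNReal.ofReal (ℓ⁻¹ * (∫ s in c..(c+ℓ), |G (Function.update x i s)|))
          + ENNReal.ofReal (∫ s in c..(c+ℓ), |pd i G (Function.update x i s)|) := by
        rw [ENNReal.ofReal_add (by positivity)
          (intervalIntegral.integral_nonneg hle (fun s _ => abs_nonneg _))]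
    _ = (ENNReal.ofReal ℓ)⁻¹ * (∫⁻ t in Icc c (c+ℓ), ENNReal.ofReal |G (Function.update x i t)|)
          + ∫⁻ t in Icc c (c+ℓ), ENNReal.ofReal |pd i G (Function.update x i t)| := by
        rw [ENNReal.ofReal_mul (by positivity), conv _ hucont, conv _ hu'cont,
          ENNReal.ofReal_inv_of_pos hℓ]

lemma cons_lint {n : ℕ} (G : (Fin (n+1) → ℝ) → ℝ≥0∞) (hG : Measurable G) (a b : Fin (n+1) → ℝ) :
    ∫⁻ x in Icc a b, G x = ∫⁻ t in Icc (a 0) (b 0), ∫⁻ y in Icc (Fin.tail a) (Fin.tail b), G (Fin.cons t y) := by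
  have hmp := measurePreserving_piFinSuccAbove (fun _ : Fin (n+1) => (volume : Measure ℝ)) 0
  have hemb := (MeasurableEquiv.piFinSuccAbove (fun _ : Fin (n+1) => ℝ) 0).measurableEmbedding
  have hpre : (MeasurableEquiv.piFinSuccAbove (fun _ : Fin (n+1) => ℝ) 0) ⁻¹'
      ((Icc (a 0) (b 0)) ×ˢ (Icc (Fin.tail a) (Fin.tail b))) = Icc a b := by
    ext x
    simp only [MeasurableEquiv.piFinSuccAbove_apply, Set.mem_preimage, Set.mem_prod, Set.mem_Icc]
    constructor
    · rintro ⟨⟨h1, h2⟩, h3, h4⟩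
      constructor <;> intro i <;>
      · refine Fin.cases ?_ (fun j => ?_) i
        · exact (by assumption)
        · first
          | exact (by have := h3 j; simpa [Fin.tail, Fin.zero_succAbove] using this)
          | exact (by have := h4 j; simpa [Fin.tail, Fin.zero_succAbove] using this)
    · rintro ⟨h1, h2⟩
      refine ⟨⟨h1 0, h2 0⟩, fun j => ?_, fun j => ?_⟩
      · simpa [Fin.tail, Fin.zero_succAbove] using h1 j.succ
      · simpa [Fin.tail, Fin.zero_succAbove] using h2 j.succ
  have key := hmp.setLIntegral_comp_preimage_emb hemb
      (fun z => G ((MeasurableEquiv.piFinSuccAbove (fun _ : Fin (n+1) => ℝ) 0).symm z))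
      ((Icc (a 0) (b 0)) ×ˢ (Icc (Fin.tail a) (Fin.tail b)))
  rw [hpre] at key
  have hGx : ∀ x, G ((MeasurableEquiv.piFinSuccAbove (fun _ : Fin (n+1) => ℝ) 0).symm
      ((MeasurableEquiv.piFinSuccAbove (fun _ : Fin (n+1) => ℝ) 0) x)) = G x := by
    intro x; rw [MeasurableEquiv.symm_apply_apply]
  rw [show (volume : Measure (Fin (n+1) → ℝ)) = Measure.pi (fun _ => volume) from rfl]
  simp only [hGx] at key
  rw [key]
  rw [← Measure.prod_restrict]
  rw [lintegral_prod]
  swap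
  · exact (hG.comp (MeasurableEquiv.piFinSuccAbove (fun _ : Fin (n+1) => ℝ) 0).symm.measurable).aemeasurable
  congr 1
  ext t
  congr 1
  ext y
  congr 1
  simp [MeasurableEquiv.piFinSuccAbove_symm_apply, Fin.insertNthEquiv, Fin.insertNth_zero]

lemma measurable_cons {n : ℕ} (t : ℝ) :
    Measurable (fun (y : Fin n → ℝ) => (Fin.cons t y : Fin (n+1) → ℝ)) := by
  refine measurable_pi_iff.mpr fun i => ?_
  refine Fin.cases ?_ (fun j => ?_) i
  · simpa using measurable_const
  · simpa using measurable_pi_apply j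

lemma lint_fin0 (H : (Fin 0 → ℝ) → ℝ≥0∞) (c d : Fin 0 → ℝ) :
    ∫⁻ y in Icc c d, H y = H default := by
  have h1 : (Icc c d : Set (Fin 0 → ℝ)) = univ := by
    ext x; simp [Pi.le_def, mem_Icc, (by intro i; exact i.elim0 : ∀ i : Fin 0, False)]
  have h2 : (volume : Measure (Fin 0 → ℝ)) univ = 1 := by
    rw [show (volume : Measure (Fin 0 → ℝ)) = Measure.pi (fun _ => volume) from rfl,
      Measure.pi_univ]
    simp
  rw [h1, Measure.restrict_univ, MeasureTheory.lintegral_unique, h2, mul_one]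
  exact congrArg H (Subsingleton.elim _ _)

lemma F3 (G : (Fin 3 → ℝ) → ℝ≥0∞) (hG : Measurable G) (a b : Fin 3 → ℝ) :
    ∫⁻ x in Icc a b, G x =
      ∫⁻ t₀ in Icc (a 0) (b 0), ∫⁻ t₁ in Icc (a 1) (b 1), ∫⁻ t₂ in Icc (a 2) (b 2),
        G ![t₀, t₁, t₂] := by
  rw [cons_lint G hG]
  refine lintegral_congr fun t₀ => ?_
  rw [cons_lint (fun y => G (Fin.cons t₀ y)) (hG.comp (measurable_cons t₀))
    (Fin.tail a) (Fin.tail b)]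
  have e1 : Fin.tail a 0 = a 1 := rfl
  have e1' : Fin.tail b 0 = b 1 := rfl
  rw [e1, e1']
  refine lintegral_congr fun t₁ => ?_
  rw [cons_lint (fun y => G (Fin.cons t₀ (Fin.cons t₁ y)))
    ((hG.comp (measurable_cons t₀)).comp (measurable_cons t₁))
    (Fin.tail (Fin.tail a)) (Fin.tail (Fin.tail b))]
  have e2 : Fin.tail (Fin.tail a) 0 = a 2 := rfl
  have e2' : Fin.tail (Fin.tail b) 0 = b 2 := rfl
  rw [e2, e2']
  refine lintegral_congr fun t₂ => ?_
  rw [lint_fin0]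
  congr 1
  funext j
  fin_cases j <;> rfl

lemma upd3 (x : Fin 3 → ℝ) (t₀ t₁ t₂ : ℝ) :
    Function.update (Function.update (Function.update x 0 t₀) 1 t₁) 2 t₂ = ![t₀, t₁, t₂] := by
  funext j
  fin_cases j <;> simp [Function.update] <;> rfl


/-- integral of `|G|` over a cube -/
def cInt (a : Fin 3 → ℝ) (ℓ : ℝ) (G : (Fin 3 → ℝ) → ℝ) : ℝ≥0∞ :=
  ∫⁻ y in Icc a (fun i => a i + ℓ), ENNReal.ofReal |G y|

lemma cont_mat3 : Continuous (fun p : (ℝ × ℝ) × ℝ => (![p.1.1, p.1.2, p.2] : Fin 3 → ℝ)) := by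
  refine continuous_pi fun j => ?_
  fin_cases j
  · exact continuous_fst.comp continuous_fst
  · exact continuous_snd.comp continuous_fst
  · exact continuous_snd

/-- The cube pointwise (Sobolev-type) bound. -/
lemma cubeBound {F : (Fin 3 → ℝ) → ℝ} (hF : ContDiff ℝ (⊤ : ℕ∞) F) (a : Fin 3 → ℝ) {ℓ : ℝ}
    (hℓ : 0 < ℓ) (x : Fin 3 → ℝ) (hx : x ∈ Icc a (fun i => a i + ℓ)) :
    ENNReal.ofReal |F x| ≤
      (ENNReal.ofReal ℓ)⁻¹ ^ 3 * cInt a ℓ F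
      + (ENNReal.ofReal ℓ)⁻¹ ^ 2 * cInt a ℓ (pd 0 F)
      + (ENNReal.ofReal ℓ)⁻¹ ^ 2 * cInt a ℓ (pd 1 F)
      + (ENNReal.ofReal ℓ)⁻¹ ^ 2 * cInt a ℓ (pd 2 F)
      + (ENNReal.ofReal ℓ)⁻¹ * cInt a ℓ (pd 1 (pd 0 F))
      + (ENNReal.ofReal ℓ)⁻¹ * cInt a ℓ (pd 2 (pd 0 F))
      + (ENNReal.ofReal ℓ)⁻¹ * cInt a ℓ (pd 2 (pd 1 F))
      + cInt a ℓ (pd 2 (pd 1 (pd 0 F))) := by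
  set e := (ENNReal.ofReal ℓ)⁻¹ with he
  have he_top : e ≠ ⊤ := by
    simp [he, ENNReal.inv_ne_top, ENNReal.ofReal_pos.mpr hℓ, (ENNReal.ofReal_pos.mpr hℓ).ne']
  have hxi : ∀ i, x i ∈ Icc (a i) (a i + ℓ) := by
    rw [mem_Icc] at hx
    exact fun i => ⟨hx.1 i, hx.2 i⟩
  -- abbreviations
  set I0 := Icc (a 0) (a 0 + ℓ)
  have measK1 : ∀ (H : (Fin 3 → ℝ) → ℝ), Continuous H →
      Measurable (fun t₀ : ℝ => ∫⁻ t₁ in Icc (a 1) (a 1 + ℓ),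
        ENNReal.ofReal |H (Function.update (Function.update x 0 t₀) 1 t₁)|) := by
    intro H hH
    apply Measurable.lintegral_prod_right'
      (f := fun p : ℝ × ℝ =>
        ENNReal.ofReal |H (Function.update (Function.update x 0 p.1) 1 p.2)|)
    apply (ENNReal.continuous_ofReal.comp ((hH.comp
      (((continuous_const.update 0 continuous_fst)).update 1 continuous_snd)).abs)).measurable
  have measK2 : ∀ (H : (Fin 3 → ℝ) → ℝ), Continuous H →
      Measurable (fun p : ℝ × ℝ => ∫⁻ t₂ in Icc (a 2) (a 2 + ℓ),
        ENNReal.ofReal |H ![p.1, p.2, t₂]|) := by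
    intro H hH
    apply Measurable.lintegral_prod_right'
      (f := fun q : (ℝ × ℝ) × ℝ => ENNReal.ofReal |H ![q.1.1, q.1.2, q.2]|)
    exact (ENNReal.continuous_ofReal.comp ((hH.comp cont_mat3).abs)).measurable
  -- stage bounds
  have h0 : ∀ (H : (Fin 3 → ℝ) → ℝ), ContDiff ℝ (⊤ : ℕ∞) H →
      ENNReal.ofReal |H x| ≤
        e * (∫⁻ t₀ in I0, ENNReal.ofReal |H (Function.update x 0 t₀)|)
        + ∫⁻ t₀ in I0, ENNReal.ofReal |pd 0 H (Function.update x 0 t₀)| := by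
    intro H hH
    exact slice hH 0 hℓ x (hxi 0)
  have h1 : ∀ (H : (Fin 3 → ℝ) → ℝ), ContDiff ℝ (⊤ : ℕ∞) H →
      (∫⁻ t₀ in I0, ENNReal.ofReal |H (Function.update x 0 t₀)|) ≤
        e * (∫⁻ t₀ in I0, ∫⁻ t₁ in Icc (a 1) (a 1 + ℓ),
            ENNReal.ofReal |H (Function.update (Function.update x 0 t₀) 1 t₁)|)
        + ∫⁻ t₀ in I0, ∫⁻ t₁ in Icc (a 1) (a 1 + ℓ),
            ENNReal.ofReal |pd 1 H (Function.update (Function.update x 0 t₀) 1 t₁)| := by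
    intro H hH
    have step : ∀ t₀ : ℝ, ENNReal.ofReal |H (Function.update x 0 t₀)| ≤
        e * (∫⁻ t₁ in Icc (a 1) (a 1 + ℓ),
            ENNReal.ofReal |H (Function.update (Function.update x 0 t₀) 1 t₁)|)
        + ∫⁻ t₁ in Icc (a 1) (a 1 + ℓ),
            ENNReal.ofReal |pd 1 H (Function.update (Function.update x 0 t₀) 1 t₁)| := by
      intro t₀
      have hy : (Function.update x 0 t₀) 1 ∈ Icc (a 1) (a 1 + ℓ) := by
        rw [Function.update_of_ne (by decide)]
        exact hxi 1
      exact slice hH 1 hℓ (Function.update x 0 t₀) hy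
    calc (∫⁻ t₀ in I0, ENNReal.ofReal |H (Function.update x 0 t₀)|)
        ≤ ∫⁻ t₀ in I0, (e * (∫⁻ t₁ in Icc (a 1) (a 1 + ℓ),
            ENNReal.ofReal |H (Function.update (Function.update x 0 t₀) 1 t₁)|)
          + ∫⁻ t₁ in Icc (a 1) (a 1 + ℓ),
            ENNReal.ofReal |pd 1 H (Function.update (Function.update x 0 t₀) 1 t₁)|) :=
          lintegral_mono step
      _ = _ := by
          rw [lintegral_add_left (((measK1 H hH.continuous)).const_mul e),
            lintegral_const_mul' e _ he_top]
  have h2 : ∀ (H : (Fin 3 → ℝ) → ℝ), ContDiff ℝ (⊤ : ℕ∞) H →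
      (∫⁻ t₀ in I0, ∫⁻ t₁ in Icc (a 1) (a 1 + ℓ),
          ENNReal.ofReal |H (Function.update (Function.update x 0 t₀) 1 t₁)|) ≤
        e * (∫⁻ t₀ in I0, ∫⁻ t₁ in Icc (a 1) (a 1 + ℓ), ∫⁻ t₂ in Icc (a 2) (a 2 + ℓ),
            ENNReal.ofReal |H ![t₀, t₁, t₂]|)
        + ∫⁻ t₀ in I0, ∫⁻ t₁ in Icc (a 1) (a 1 + ℓ), ∫⁻ t₂ in Icc (a 2) (a 2 + ℓ),
            ENNReal.ofReal |pd 2 H ![t₀, t₁, t₂]| := by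
    intro H hH
    have step : ∀ t₀ t₁ : ℝ,
        ENNReal.ofReal |H (Function.update (Function.update x 0 t₀) 1 t₁)| ≤
        e * (∫⁻ t₂ in Icc (a 2) (a 2 + ℓ), ENNReal.ofReal |H ![t₀, t₁, t₂]|)
        + ∫⁻ t₂ in Icc (a 2) (a 2 + ℓ), ENNReal.ofReal |pd 2 H ![t₀, t₁, t₂]| := by
      intro t₀ t₁
      have hy : (Function.update (Function.update x 0 t₀) 1 t₁) 2 ∈ Icc (a 2) (a 2 + ℓ) := by
        rw [Function.update_of_ne (by decide), Function.update_of_ne (by decide)]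
        exact hxi 2
      have := slice hH 2 hℓ (Function.update (Function.update x 0 t₀) 1 t₁) hy
      simpa only [upd3] using this
    have inner : ∀ t₀ : ℝ,
        (∫⁻ t₁ in Icc (a 1) (a 1 + ℓ),
          ENNReal.ofReal |H (Function.update (Function.update x 0 t₀) 1 t₁)|) ≤
        e * (∫⁻ t₁ in Icc (a 1) (a 1 + ℓ), ∫⁻ t₂ in Icc (a 2) (a 2 + ℓ),
            ENNReal.ofReal |H ![t₀, t₁, t₂]|)
        + ∫⁻ t₁ in Icc (a 1) (a 1 + ℓ), ∫⁻ t₂ in Icc (a 2) (a 2 + ℓ),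
            ENNReal.ofReal |pd 2 H ![t₀, t₁, t₂]| := by
      intro t₀
      calc (∫⁻ t₁ in Icc (a 1) (a 1 + ℓ),
            ENNReal.ofReal |H (Function.update (Function.update x 0 t₀) 1 t₁)|)
          ≤ ∫⁻ t₁ in Icc (a 1) (a 1 + ℓ),
              (e * (∫⁻ t₂ in Icc (a 2) (a 2 + ℓ), ENNReal.ofReal |H ![t₀, t₁, t₂]|)
              + ∫⁻ t₂ in Icc (a 2) (a 2 + ℓ), ENNReal.ofReal |pd 2 H ![t₀, t₁, t₂]|) :=
            lintegral_mono (step t₀)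
        _ = _ := by
            have m2 : Measurable (fun t₁ : ℝ => ∫⁻ t₂ in Icc (a 2) (a 2 + ℓ),
                ENNReal.ofReal |H ![t₀, t₁, t₂]|) := by
              exact (measK2 H hH.continuous).comp measurable_prodMk_left
            rw [lintegral_add_left (m2.const_mul e), lintegral_const_mul' e _ he_top]
    calc (∫⁻ t₀ in I0, ∫⁻ t₁ in Icc (a 1) (a 1 + ℓ),
          ENNReal.ofReal |H (Function.update (Function.update x 0 t₀) 1 t₁)|)
        ≤ ∫⁻ t₀ in I0,
            (e * (∫⁻ t₁ in Icc (a 1) (a 1 + ℓ), ∫⁻ t₂ in Icc (a 2) (a 2 + ℓ),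
              ENNReal.ofReal |H ![t₀, t₁, t₂]|)
            + ∫⁻ t₁ in Icc (a 1) (a 1 + ℓ), ∫⁻ t₂ in Icc (a 2) (a 2 + ℓ),
              ENNReal.ofReal |pd 2 H ![t₀, t₁, t₂]|) := lintegral_mono inner
      _ = _ := by
          have m1 : Measurable (fun t₀ : ℝ => ∫⁻ t₁ in Icc (a 1) (a 1 + ℓ),
              ∫⁻ t₂ in Icc (a 2) (a 2 + ℓ), ENNReal.ofReal |H ![t₀, t₁, t₂]|) :=
            Measurable.lintegral_prod_right' (measK2 H hH.continuous)
          rw [lintegral_add_left (m1.const_mul e), lintegral_const_mul' e _ he_top]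
  -- J = cInt via Fubini
  have hJ : ∀ (H : (Fin 3 → ℝ) → ℝ), Continuous H →
      (∫⁻ t₀ in I0, ∫⁻ t₁ in Icc (a 1) (a 1 + ℓ), ∫⁻ t₂ in Icc (a 2) (a 2 + ℓ),
        ENNReal.ofReal |H ![t₀, t₁, t₂]|) = cInt a ℓ H := by
    intro H hH
    rw [cInt]
    exact (F3 (fun y => ENNReal.ofReal |H y|)
      (by exact (ENNReal.continuous_ofReal.comp hH.abs).measurable) a (fun i => a i + ℓ)).symm
  -- combine the stages
  have c0 := h0 F hF
  have c1F := h1 F hF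
  have c1p0 := h1 (pd 0 F) (pd_contDiff hF 0)
  have c2F := h2 F hF
  have c2p0 := h2 (pd 0 F) (pd_contDiff hF 0)
  have c2p1 := h2 (pd 1 F) (pd_contDiff hF 1)
  have c2p10 := h2 (pd 1 (pd 0 F)) (pd_contDiff (pd_contDiff hF 0) 1)
  have hcomb : ENNReal.ofReal |F x| ≤
      e * (e * (e * cInt a ℓ F + cInt a ℓ (pd 2 F))
           + (e * cInt a ℓ (pd 1 F) + cInt a ℓ (pd 2 (pd 1 F))))
      + (e * (e * cInt a ℓ (pd 0 F) + cInt a ℓ (pd 2 (pd 0 F)))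
           + (e * cInt a ℓ (pd 1 (pd 0 F)) + cInt a ℓ (pd 2 (pd 1 (pd 0 F))))) := by
    rw [hJ F hF.continuous] at c2F
    rw [hJ (pd 2 F) (pd_cont hF 2)] at c2F
    rw [hJ (pd 0 F) (pd_cont hF 0)] at c2p0
    rw [hJ (pd 2 (pd 0 F)) (pd_cont (pd_contDiff hF 0) 2)] at c2p0
    rw [hJ (pd 1 F) (pd_cont hF 1)] at c2p1
    rw [hJ (pd 2 (pd 1 F)) (pd_cont (pd_contDiff hF 1) 2)] at c2p1
    rw [hJ (pd 1 (pd 0 F)) (pd_cont (pd_contDiff hF 0) 1)] at c2p10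
    rw [hJ (pd 2 (pd 1 (pd 0 F))) (pd_cont (pd_contDiff (pd_contDiff hF 0) 1) 2)] at c2p10
    refine c0.trans (add_le_add (mul_le_mul_right (c1F.trans (add_le_add
      (mul_le_mul_right c2F _) c2p1)) _) (c1p0.trans (add_le_add
      (mul_le_mul_right c2p0 _) c2p10)))
  refine hcomb.trans (le_of_eq ?_)
  ring

/-! ## Partition of the torus into small boxes -/

def box3 (p : Fin 3 → ℝ) (L : ℝ) : Set (Fin 3 → ℝ) := univ.pi fun i => Ico (p i) (p i + L)

lemma box3_meas (p : Fin 3 → ℝ) (L : ℝ) : MeasurableSet (box3 p L) :=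
  MeasurableSet.univ_pi fun _ => measurableSet_Ico

lemma box3_subset (p : Fin 3 → ℝ) (L : ℝ) : box3 p L ⊆ Icc p (fun i => p i + L) := by
  intro x hx
  rw [box3, Set.mem_univ_pi] at hx
  rw [mem_Icc]
  exact ⟨fun i => (hx i).1, fun i => le_of_lt (hx i).2⟩

lemma hyper_null (i : Fin 3) (c : ℝ) : volume {x : Fin 3 → ℝ | x i = c} = 0 := by
  have hset : {x : Fin 3 → ℝ | x i = c}
      = univ.pi (fun j => if j = i then ({c} : Set ℝ) else univ) := by
    ext x
    simp only [mem_setOf_eq, Set.mem_univ_pi]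
    constructor
    · intro h j
      by_cases hj : j = i
      · subst hj; simp [h]
      · simp [hj]
    · intro h
      have := h i
      simpa using this
  rw [hset, show (volume : Measure (Fin 3 → ℝ)) = Measure.pi (fun _ => volume) from rfl,
    Measure.pi_pi]
  refine Finset.prod_eq_zero (Finset.mem_univ i) ?_
  simp

lemma Icc_box_null (p : Fin 3 → ℝ) (L : ℝ) :
    volume (Icc p (fun i => p i + L) \ box3 p L) = 0 := by
  refine measure_mono_null (fun x hx => ?_) (measure_iUnion_null
    (fun i : Fin 3 => hyper_null i (p i + L)))
  obtain ⟨hx1, hx2⟩ := hx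
  rw [mem_Icc] at hx1
  rw [box3, Set.mem_univ_pi] at hx2
  push_neg at hx2
  obtain ⟨i, hi⟩ := hx2
  rw [mem_Ico] at hi
  push_neg at hi
  refine mem_iUnion.mpr ⟨i, ?_⟩
  exact le_antisymm (hx1.2 i) (hi (hx1.1 i))

lemma restrict_box (p : Fin 3 → ℝ) (L : ℝ) :
    volume.restrict (Icc p (fun i => p i + L)) = volume.restrict (box3 p L) := by
  refine Measure.restrict_congr_set ?_
  rw [MeasureTheory.ae_eq_set]
  refine ⟨Icc_box_null p L, ?_⟩
  rw [Set.diff_eq_empty.mpr (box3_subset p L)]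
  simp

lemma box3_disj {m : ℕ} {L : ℝ} (hL : 0 < L) {z z' : Fin 3 → Fin m} (h : z ≠ z') :
    Disjoint (box3 (fun i => L * ((z i : ℕ) : ℝ)) L) (box3 (fun i => L * ((z' i : ℕ) : ℝ)) L) := by
  rw [Set.disjoint_left]
  intro x hx hx'
  obtain ⟨i, hi⟩ := Function.ne_iff.mp h
  rw [box3, Set.mem_univ_pi] at hx hx'
  have h1 := hx i
  have h2 := hx' i
  rw [mem_Ico] at h1 h2
  have hne : (z i : ℕ) ≠ (z' i : ℕ) := fun hc => hi (Fin.val_injective hc)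
  rcases Nat.lt_or_ge (z i : ℕ) (z' i : ℕ) with hlt | hge
  · have : ((z i : ℕ) : ℝ) + 1 ≤ ((z' i : ℕ) : ℝ) := by exact_mod_cast hlt
    nlinarith [h1.1, h1.2, h2.1, h2.2]
  · have hlt' : (z' i : ℕ) < (z i : ℕ) := lt_of_le_of_ne hge (Ne.symm hne)
    have : ((z' i : ℕ) : ℝ) + 1 ≤ ((z i : ℕ) : ℝ) := by exact_mod_cast hlt'
    nlinarith [h1.1, h1.2, h2.1, h2.2]

lemma box3_cover {m : ℕ} {L : ℝ} (hL : 0 < L) :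
    box3 (0 : Fin 3 → ℝ) (L * m) ⊆
      ⋃ z : Fin 3 → Fin m, box3 (fun i => L * ((z i : ℕ) : ℝ)) L := by
  intro x hx
  rw [box3, Set.mem_univ_pi] at hx
  simp only [Pi.zero_apply, zero_add, mem_Ico] at hx
  have hm : ∀ i, Nat.floor (x i / L) < m := by
    intro i
    have hnn : 0 ≤ x i / L := div_nonneg (hx i).1 hL.le
    rw [Nat.floor_lt hnn]
    rw [div_lt_iff₀ hL]
    calc x i < L * m := (hx i).2
    _ = m * L := by ring
  refine mem_iUnion.mpr ⟨fun i => ⟨Nat.floor (x i / L), hm i⟩, ?_⟩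
  rw [box3, Set.mem_univ_pi]
  intro i
  have hnn : 0 ≤ x i / L := div_nonneg (hx i).1 hL.le
  constructor
  · calc L * ((Nat.floor (x i / L) : ℝ)) ≤ L * (x i / L) :=
        mul_le_mul_of_nonneg_left (Nat.floor_le hnn) hL.le
    _ = x i := by field_simp
  · have h2 : x i / L < Nat.floor (x i / L) + 1 := Nat.lt_floor_add_one _
    calc x i = L * (x i / L) := by field_simp
    _ < L * (Nat.floor (x i / L) + 1) := by
        exact mul_lt_mul_of_pos_left h2 hL
    _ = L * (Nat.floor (x i / L) : ℝ) + L := by ring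

lemma box3_in_big {m : ℕ} {L : ℝ} (hL : 0 < L) (z : Fin 3 → Fin m) :
    box3 (fun i => L * ((z i : ℕ) : ℝ)) L ⊆ Icc (0 : Fin 3 → ℝ) (fun _ => L * m) := by
  refine subset_trans (box3_subset _ _) ?_
  intro x hx
  rw [mem_Icc] at hx ⊢
  constructor <;> intro i
  · have := hx.1 i
    have h0 : (0:ℝ) ≤ L * ((z i : ℕ) : ℝ) := by positivity
    calc (0:ℝ) ≤ L * ((z i : ℕ) : ℝ) := h0
    _ ≤ x i := this
  · have := hx.2 i
    have hzi : ((z i : ℕ) : ℝ) + 1 ≤ m := by exact_mod_cast (z i).2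
    calc x i ≤ L * ((z i : ℕ) : ℝ) + L := this
    _ = L * (((z i : ℕ) : ℝ) + 1) := by ring
    _ ≤ L * m := mul_le_mul_of_nonneg_left hzi hL.le

lemma part_le {m : ℕ} {L : ℝ} (hL : 0 < L) (h : (Fin 3 → ℝ) → ℝ≥0∞) :
    ∫⁻ x in Icc (0 : Fin 3 → ℝ) (fun _ => L * m), h x ≤
      ∑ z : Fin 3 → Fin m, ∫⁻ x in Icc (fun i => L * ((z i : ℕ) : ℝ))
        (fun i => L * ((z i : ℕ) : ℝ) + L), h x := by
  have h0 : (Icc (0 : Fin 3 → ℝ) (fun _ => L * m))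
      = Icc (0 : Fin 3 → ℝ) (fun i => (0 : Fin 3 → ℝ) i + L * m) := by
    congr 1; funext i; simp
  rw [h0, restrict_box 0 (L * m)]
  calc ∫⁻ x in box3 (0 : Fin 3 → ℝ) (L * m), h x
      ≤ ∫⁻ x in ⋃ z : Fin 3 → Fin m, box3 (fun i => L * ((z i : ℕ) : ℝ)) L, h x :=
        lintegral_mono' (Measure.restrict_mono (box3_cover hL) le_rfl) le_rfl
    _ ≤ ∑' z : Fin 3 → Fin m, ∫⁻ x in box3 (fun i => L * ((z i : ℕ) : ℝ)) L, h x :=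
        lintegral_iUnion_le _ _
    _ = ∑ z : Fin 3 → Fin m, ∫⁻ x in box3 (fun i => L * ((z i : ℕ) : ℝ)) L, h x :=
        tsum_fintype _
    _ ≤ _ := by
        refine Finset.sum_le_sum fun z _ => ?_
        rw [show Icc (fun i => L * ((z i : ℕ) : ℝ)) (fun i => L * ((z i : ℕ) : ℝ) + L)
          = Icc (fun i => L * ((z i : ℕ) : ℝ)) (fun i => (fun k => L * ((z k : ℕ) : ℝ)) i + L)
          from rfl, restrict_box]

lemma part_ge {m : ℕ} {L : ℝ} (hL : 0 < L) (h : (Fin 3 → ℝ) → ℝ≥0∞) (hmeas : Measurable h) :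
    ∑ z : Fin 3 → Fin m, ∫⁻ x in Icc (fun i => L * ((z i : ℕ) : ℝ))
        (fun i => L * ((z i : ℕ) : ℝ) + L), h x ≤
      ∫⁻ x in Icc (0 : Fin 3 → ℝ) (fun _ => L * m), h x := by
  have hstep : ∀ z : Fin 3 → Fin m,
      (∫⁻ x in Icc (fun i => L * ((z i : ℕ) : ℝ)) (fun i => L * ((z i : ℕ) : ℝ) + L), h x)
      = ∫⁻ x in box3 (fun i => L * ((z i : ℕ) : ℝ)) L, h x := by
    intro z
    rw [show Icc (fun i => L * ((z i : ℕ) : ℝ)) (fun i => L * ((z i : ℕ) : ℝ) + L)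
      = Icc (fun i => L * ((z i : ℕ) : ℝ)) (fun i => (fun k => L * ((z k : ℕ) : ℝ)) i + L)
      from rfl, restrict_box]
  simp only [hstep]
  rw [← tsum_fintype (L := SummationFilter.unconditional _), ← lintegral_iUnion (fun z => box3_meas _ _)
    (fun z z' hzz => box3_disj hL hzz) h]
  exact lintegral_mono' (Measure.restrict_mono
    (iUnion_subset fun z => box3_in_big hL z) le_rfl) le_rfl

lemma lint_translate (h : (Fin 3 → ℝ) → ℝ≥0∞) (w : Fin 3 → ℝ) (s : Set (Fin 3 → ℝ)) :
    ∫⁻ y in (· + w) ⁻¹' s, h (y + w) = ∫⁻ y in s, h y :=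
  (measurePreserving_add_right volume w).setLIntegral_comp_preimage_emb
    (Homeomorph.measurableEmbedding (Homeomorph.addRight w)) h s

lemma pre_box (p : Fin 3 → ℝ) (L : ℝ) (w : Fin 3 → ℝ) :
    (· + w) ⁻¹' box3 p L = box3 (p - w) L := by
  ext x
  simp only [box3, Set.mem_preimage, Set.mem_univ_pi, Pi.add_apply, Pi.sub_apply, mem_Ico]
  constructor <;> intro hh i <;> have := hh i <;> constructor <;> linarith [this.1, this.2]


/-- **Core decoupling estimate**, `L¹` and lintegral form. -/
lemma core {μn lam : ℕ} (hμ : 1 ≤ μn) (hlam : 1 ≤ lam) (hlm : lam ≤ μn)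
    {f : (Fin 3 → ℝ) → ℝ} (hf : ContDiff ℝ (⊤ : ℕ∞) f) {Cf : ℝ} (hCf : 0 < Cf)
    (HN : ∀ N, N ≤ 3 → (∫⁻ x in Icc (0 : Fin 3 → ℝ) (fun _ => 2 * Real.pi),
        ENNReal.ofReal ‖iteratedFDeriv ℝ N f x‖) ≤ ENNReal.ofReal (Cf * (lam : ℝ) ^ N))
    {g : (Fin 3 → ℝ) → ℝ} (hg : ContDiff ℝ (⊤ : ℕ∞) g)
    (hper : ∀ (x : Fin 3 → ℝ) (z : Fin 3 → ℤ),
      g (x + fun i => 2 * Real.pi / (μn : ℝ) * ((z i : ℤ) : ℝ)) = g x) :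
    (∫⁻ x in Icc (0 : Fin 3 → ℝ) (fun _ => 2 * Real.pi), ENNReal.ofReal |f x * g x|)
      ≤ ENNReal.ofReal (8 * Cf) *
        ∫⁻ x in Icc (0 : Fin 3 → ℝ) (fun _ => 2 * Real.pi), ENNReal.ofReal |g x| := by
  have hπ : (0:ℝ) < Real.pi := Real.pi_pos
  have hμR : (1:ℝ) ≤ (μn : ℝ) := by exact_mod_cast hμ
  set L : ℝ := 2 * Real.pi / μn with hLdef
  have hL : 0 < L := by positivity
  have hLμ : L * μn = 2 * Real.pi := by
    rw [hLdef]; field_simp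
  have hTeq : (fun _ : Fin 3 => L * (μn : ℝ)) = (fun _ : Fin 3 => 2 * Real.pi) := by
    funext i; rw [hLμ]
  -- pointwise bounds on the derivative chains
  have hc0 : ∀ y, |f y| ≤ ‖iteratedFDeriv ℝ 0 f y‖ := by
    intro y; rw [norm_iteratedFDeriv_zero, Real.norm_eq_abs]
  have hc1 : ∀ (i : Fin 3) (y), |pd i f y| ≤ ‖iteratedFDeriv ℝ 1 f y‖ := by
    intro i y
    calc |pd i f y| = ‖iteratedFDeriv ℝ 0 (pd i f) y‖ := by
          rw [norm_iteratedFDeriv_zero, Real.norm_eq_abs]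
    _ ≤ ‖iteratedFDeriv ℝ 1 f y‖ := pdBound hf i 0 y
  have hc2 : ∀ (i j : Fin 3) (y), |pd j (pd i f) y| ≤ ‖iteratedFDeriv ℝ 2 f y‖ := by
    intro i j y
    calc |pd j (pd i f) y| = ‖iteratedFDeriv ℝ 0 (pd j (pd i f)) y‖ := by
          rw [norm_iteratedFDeriv_zero, Real.norm_eq_abs]
    _ ≤ ‖iteratedFDeriv ℝ 1 (pd i f) y‖ := pdBound (pd_contDiff hf i) j 0 y
    _ ≤ ‖iteratedFDeriv ℝ 2 f y‖ := pdBound hf i 1 y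
  have hc3 : ∀ y, |pd 2 (pd 1 (pd 0 f)) y| ≤ ‖iteratedFDeriv ℝ 3 f y‖ := by
    intro y
    calc |pd 2 (pd 1 (pd 0 f)) y| = ‖iteratedFDeriv ℝ 0 (pd 2 (pd 1 (pd 0 f))) y‖ := by
          rw [norm_iteratedFDeriv_zero, Real.norm_eq_abs]
    _ ≤ ‖iteratedFDeriv ℝ 1 (pd 1 (pd 0 f)) y‖ :=
          pdBound (pd_contDiff (pd_contDiff hf 0) 1) 2 0 y
    _ ≤ ‖iteratedFDeriv ℝ 2 (pd 0 f) y‖ := pdBound (pd_contDiff hf 0) 1 1 y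
    _ ≤ ‖iteratedFDeriv ℝ 3 f y‖ := pdBound hf 0 2 y
  -- sum over boxes of cube integrals is controlled by the torus integral
  have hIb : ∀ (D : (Fin 3 → ℝ) → ℝ), Continuous D → ∀ k : ℕ, k ≤ 3 →
      (∀ y, |D y| ≤ ‖iteratedFDeriv ℝ k f y‖) →
      (∑ z : Fin 3 → Fin μn, cInt (fun i => L * ((z i : ℕ) : ℝ)) L D)
        ≤ ENNReal.ofReal (Cf * (lam : ℝ) ^ k) := by
    intro D hD k hk hpt
    have hmeasD : Measurable fun y => ENNReal.ofReal |D y| :=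
      (ENNReal.continuous_ofReal.comp hD.abs).measurable
    have h1 : (∑ z : Fin 3 → Fin μn, cInt (fun i => L * ((z i : ℕ) : ℝ)) L D)
        ≤ ∫⁻ x in Icc (0 : Fin 3 → ℝ) (fun _ => L * μn), ENNReal.ofReal |D x| :=
      part_ge hL _ hmeasD
    rw [hTeq] at h1
    refine h1.trans (le_trans (lintegral_mono fun y => ENNReal.ofReal_le_ofReal (hpt y)) ?_)
    exact HN k hk
  -- counting boxes for g
  have hmeasg : Measurable fun y => ENNReal.ofReal |g y| :=
    (ENNReal.continuous_ofReal.comp hg.continuous.abs).measurable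
  have htransg : ∀ z : Fin 3 → Fin μn,
      (∫⁻ x in box3 (fun i => L * ((z i : ℕ) : ℝ)) L, ENNReal.ofReal |g x|)
        = ∫⁻ y in box3 (0 : Fin 3 → ℝ) L, ENNReal.ofReal |g y| := by
    intro z
    set w : Fin 3 → ℝ := fun i => L * ((z i : ℕ) : ℝ) with hw
    have hpre : (· + w) ⁻¹' box3 w L = box3 (0 : Fin 3 → ℝ) L := by
      rw [pre_box]
      congr 1
      funext i
      simp
    have := lint_translate (fun y => ENNReal.ofReal |g y|) w (box3 w L)
    rw [hpre] at this
    rw [← this]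
    refine lintegral_congr fun y => ?_
    congr 1
    have hgy : g (y + w) = g y := by
      have h2 := hper y (fun i => ((z i : ℕ) : ℤ))
      have hweq : (fun i => 2 * Real.pi / (μn : ℝ) * (((((z i : ℕ) : ℤ)) : ℝ))) = w := by
        funext i
        rw [hw]
        push_cast
        rw [hLdef]
      rw [hweq] at h2
      exact h2
    rw [hgy]
  have hγ : ((μn : ℝ≥0∞)) ^ 3 * (∫⁻ y in box3 (0 : Fin 3 → ℝ) L, ENNReal.ofReal |g y|)
      ≤ ∫⁻ x in Icc (0 : Fin 3 → ℝ) (fun _ => 2 * Real.pi), ENNReal.ofReal |g x| := by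
    have hsum : (∑ z : Fin 3 → Fin μn,
        ∫⁻ x in box3 (fun i => L * ((z i : ℕ) : ℝ)) L, ENNReal.ofReal |g x|)
        = ((μn : ℝ≥0∞)) ^ 3 * ∫⁻ y in box3 (0 : Fin 3 → ℝ) L, ENNReal.ofReal |g y| := by
      rw [Finset.sum_congr rfl (fun z _ => htransg z), Finset.sum_const, nsmul_eq_mul]
      congr 1
      rw [show (Finset.univ : Finset (Fin 3 → Fin μn)).card = Fintype.card (Fin 3 → Fin μn)
        from rfl]
      rw [Fintype.card_fun]
      push_cast
      simp
    rw [← hsum]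
    have hstep : ∀ z : Fin 3 → Fin μn,
        (∫⁻ x in box3 (fun i => L * ((z i : ℕ) : ℝ)) L, ENNReal.ofReal |g x|)
        = ∫⁻ x in Icc (fun i => L * ((z i : ℕ) : ℝ))
            (fun i => L * ((z i : ℕ) : ℝ) + L), ENNReal.ofReal |g x| := by
      intro z
      rw [show Icc (fun i => L * ((z i : ℕ) : ℝ)) (fun i => L * ((z i : ℕ) : ℝ) + L)
        = Icc (fun i => L * ((z i : ℕ) : ℝ)) (fun i => (fun k => L * ((z k : ℕ) : ℝ)) i + L)
        from rfl, restrict_box]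
    rw [Finset.sum_congr rfl (fun z _ => hstep z)]
    have := part_ge (m := μn) hL (fun y => ENNReal.ofReal |g y|) hmeasg
    rw [hTeq] at this
    exact this
  -- main chain
  set e : ℝ≥0∞ := (ENNReal.ofReal L)⁻¹ with he
  set Ig0 : ℝ≥0∞ := ∫⁻ y in box3 (0 : Fin 3 → ℝ) L, ENNReal.ofReal |g y| with hIg0
  set Bz : (Fin 3 → Fin μn) → ℝ≥0∞ := fun z =>
      e ^ 3 * cInt (fun i => L * ((z i : ℕ) : ℝ)) L f
      + e ^ 2 * cInt (fun i => L * ((z i : ℕ) : ℝ)) L (pd 0 f)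
      + e ^ 2 * cInt (fun i => L * ((z i : ℕ) : ℝ)) L (pd 1 f)
      + e ^ 2 * cInt (fun i => L * ((z i : ℕ) : ℝ)) L (pd 2 f)
      + e * cInt (fun i => L * ((z i : ℕ) : ℝ)) L (pd 1 (pd 0 f))
      + e * cInt (fun i => L * ((z i : ℕ) : ℝ)) L (pd 2 (pd 0 f))
      + e * cInt (fun i => L * ((z i : ℕ) : ℝ)) L (pd 2 (pd 1 f))
      + cInt (fun i => L * ((z i : ℕ) : ℝ)) L (pd 2 (pd 1 (pd 0 f))) with hBz
  have hmeasfg : Measurable fun y => ENNReal.ofReal |f y * g y| :=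
    (ENNReal.continuous_ofReal.comp ((hf.continuous.mul hg.continuous).abs)).measurable
  have step1 : (∫⁻ x in Icc (0 : Fin 3 → ℝ) (fun _ => 2 * Real.pi), ENNReal.ofReal |f x * g x|)
      ≤ ∑ z : Fin 3 → Fin μn, ∫⁻ x in Icc (fun i => L * ((z i : ℕ) : ℝ))
          (fun i => L * ((z i : ℕ) : ℝ) + L), ENNReal.ofReal |f x * g x| := by
    have := part_le (m := μn) hL (fun x => ENNReal.ofReal |f x * g x|)
    rw [hTeq] at this
    exact this
  have step2 : ∀ z : Fin 3 → Fin μn,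
      (∫⁻ x in Icc (fun i => L * ((z i : ℕ) : ℝ))
          (fun i => L * ((z i : ℕ) : ℝ) + L), ENNReal.ofReal |f x * g x|)
      ≤ Bz z * Ig0 := by
    intro z
    set w : Fin 3 → ℝ := fun i => L * ((z i : ℕ) : ℝ) with hw
    have hIccbox : (∫⁻ x in Icc (fun i => L * ((z i : ℕ) : ℝ))
        (fun i => L * ((z i : ℕ) : ℝ) + L), ENNReal.ofReal |f x * g x|)
        = ∫⁻ x in box3 w L, ENNReal.ofReal |f x * g x| := by
      rw [show Icc (fun i => L * ((z i : ℕ) : ℝ)) (fun i => L * ((z i : ℕ) : ℝ) + L)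
        = Icc w (fun i => w i + L) from rfl, restrict_box]
    have hpre : (· + w) ⁻¹' box3 w L = box3 (0 : Fin 3 → ℝ) L := by
      rw [pre_box]; congr 1; funext i; simp
    have htr := lint_translate (fun x => ENNReal.ofReal |f x * g x|) w (box3 w L)
    rw [hpre] at htr
    rw [hIccbox, ← htr]
    have hgper : ∀ y : Fin 3 → ℝ, g (y + w) = g y := by
      intro y
      have h2 := hper y (fun i => ((z i : ℕ) : ℤ))
      have hweq : (fun i => 2 * Real.pi / (μn : ℝ) * (((((z i : ℕ) : ℤ)) : ℝ))) = w := by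
        funext i; rw [hw]; push_cast; rw [hLdef]
      rw [hweq] at h2
      exact h2
    have hptw : ∀ y ∈ box3 (0 : Fin 3 → ℝ) L,
        ENNReal.ofReal |f (y + w) * g (y + w)| ≤ Bz z * ENNReal.ofReal |g y| := by
      intro y hy
      have hmem : y + w ∈ Icc w (fun i => w i + L) := by
        rw [box3, Set.mem_univ_pi] at hy
        rw [mem_Icc]
        constructor <;> intro i <;> have := hy i <;>
          simp only [Pi.zero_apply, zero_add, mem_Ico, Pi.add_apply] at this ⊢ <;>
          [linarith [this.1]; linarith [this.2.le]]
      have hcb := cubeBound hf w hL (y + w) hmem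
      rw [hgper y, abs_mul, ENNReal.ofReal_mul (abs_nonneg _)]
      exact mul_le_mul_left hcb _
    calc (∫⁻ y in box3 (0 : Fin 3 → ℝ) L, ENNReal.ofReal |f (y + w) * g (y + w)|)
        ≤ ∫⁻ y in box3 (0 : Fin 3 → ℝ) L, Bz z * ENNReal.ofReal |g y| :=
          setLIntegral_mono (by exact hmeasg.const_mul (Bz z)) hptw
      _ = Bz z * Ig0 := lintegral_const_mul (Bz z) hmeasg
  -- sum of the box bounds
  have step5 : (∑ z : Fin 3 → Fin μn, Bz z) ≤
      e ^ 3 * ENNReal.ofReal (Cf * (lam : ℝ) ^ 0)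
      + e ^ 2 * ENNReal.ofReal (Cf * (lam : ℝ) ^ 1)
      + e ^ 2 * ENNReal.ofReal (Cf * (lam : ℝ) ^ 1)
      + e ^ 2 * ENNReal.ofReal (Cf * (lam : ℝ) ^ 1)
      + e * ENNReal.ofReal (Cf * (lam : ℝ) ^ 2)
      + e * ENNReal.ofReal (Cf * (lam : ℝ) ^ 2)
      + e * ENNReal.ofReal (Cf * (lam : ℝ) ^ 2)
      + ENNReal.ofReal (Cf * (lam : ℝ) ^ 3) := by
    rw [hBz]
    simp only [Finset.sum_add_distrib, ← Finset.mul_sum]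
    refine add_le_add (add_le_add (add_le_add (add_le_add (add_le_add (add_le_add (add_le_add
      (mul_le_mul_right (hIb f hf.continuous 0 (by norm_num) hc0) _)
      (mul_le_mul_right (hIb (pd 0 f) (pd_cont hf 0) 1 (by norm_num) (hc1 0)) _))
      (mul_le_mul_right (hIb (pd 1 f) (pd_cont hf 1) 1 (by norm_num) (hc1 1)) _))
      (mul_le_mul_right (hIb (pd 2 f) (pd_cont hf 2) 1 (by norm_num) (hc1 2)) _))
      (mul_le_mul_right (hIb (pd 1 (pd 0 f)) (pd_cont (pd_contDiff hf 0) 1) 2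
        (by norm_num) (hc2 0 1)) _))
      (mul_le_mul_right (hIb (pd 2 (pd 0 f)) (pd_cont (pd_contDiff hf 0) 2) 2
        (by norm_num) (hc2 0 2)) _))
      (mul_le_mul_right (hIb (pd 2 (pd 1 f)) (pd_cont (pd_contDiff hf 1) 2) 2
        (by norm_num) (hc2 1 2)) _))
      (hIb (pd 2 (pd 1 (pd 0 f))) (pd_cont (pd_contDiff (pd_contDiff hf 0) 1) 2) 3
        (by norm_num) hc3)
  -- coefficient arithmetic
  have hcoef : ∀ k : ℕ, k ≤ 3 →
      e ^ (3 - k) * ENNReal.ofReal (Cf * (lam : ℝ) ^ k)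
        ≤ ENNReal.ofReal Cf * ((μn : ℝ≥0∞)) ^ 3 := by
    intro k hk
    have h1 : e = ENNReal.ofReal L⁻¹ := by
      rw [he, ENNReal.ofReal_inv_of_pos hL]
    have h2 : e ^ (3 - k) = ENNReal.ofReal (L⁻¹ ^ (3 - k)) := by
      rw [h1, ENNReal.ofReal_pow (by positivity)]
    rw [h2, ← ENNReal.ofReal_mul (by positivity)]
    have hμ3 : ((μn : ℝ≥0∞)) ^ 3 = ENNReal.ofReal ((μn : ℝ) ^ 3) := by
      rw [ENNReal.ofReal_pow (by positivity), ENNReal.ofReal_natCast]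
    rw [hμ3, ← ENNReal.ofReal_mul hCf.le]
    apply ENNReal.ofReal_le_ofReal
    have hLinv : L⁻¹ = (μn : ℝ) / (2 * Real.pi) := by
      rw [hLdef]; field_simp
    have hbound1 : L⁻¹ ≤ (μn : ℝ) := by
      rw [hLinv, div_le_iff₀ (by positivity)]
      nlinarith [Real.pi_gt_three]
    have hbound1' : (0:ℝ) ≤ L⁻¹ := by positivity
    have hlamR : (lam : ℝ) ≤ (μn : ℝ) := by exact_mod_cast hlm
    have hlamR0 : (0:ℝ) ≤ (lam : ℝ) := by positivity
    calc L⁻¹ ^ (3 - k) * (Cf * (lam : ℝ) ^ k)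
        ≤ (μn : ℝ) ^ (3 - k) * (Cf * (μn : ℝ) ^ k) := by
          apply mul_le_mul (pow_le_pow_left₀ hbound1' hbound1 _)
            (mul_le_mul_of_nonneg_left (pow_le_pow_left₀ hlamR0 hlamR _) hCf.le)
            (by positivity) (by positivity)
      _ = Cf * ((μn : ℝ) ^ (3 - k) * (μn : ℝ) ^ k) := by ring
      _ = Cf * (μn : ℝ) ^ 3 := by
          rw [← pow_add, Nat.sub_add_cancel hk]
  have hK : (∑ z : Fin 3 → Fin μn, Bz z) ≤ ENNReal.ofReal (8 * Cf) * ((μn : ℝ≥0∞)) ^ 3 := by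
    refine step5.trans ?_
    have h8 : ENNReal.ofReal (8 * Cf) * ((μn : ℝ≥0∞)) ^ 3
        = (ENNReal.ofReal Cf * ((μn : ℝ≥0∞)) ^ 3) * 8 := by
      rw [show (8:ℝ) * Cf = Cf * 8 by ring, ENNReal.ofReal_mul hCf.le]
      rw [show ENNReal.ofReal (8:ℝ) = (8:ℝ≥0∞) by
        rw [show (8:ℝ) = ((8:ℕ):ℝ) by norm_num, ENNReal.ofReal_natCast]; norm_num]
      ring
    rw [h8]
    have t0 := hcoef 0 (by norm_num)
    have t1 := hcoef 1 (by norm_num)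
    have t2 := hcoef 2 (by norm_num)
    have t3 := hcoef 3 (by norm_num)
    norm_num at t0 t1 t2 t3 ⊢
    calc e ^ 3 * ENNReal.ofReal Cf + e ^ 2 * ENNReal.ofReal (Cf * (lam : ℝ))
        + e ^ 2 * ENNReal.ofReal (Cf * (lam : ℝ))
        + e ^ 2 * ENNReal.ofReal (Cf * (lam : ℝ))
        + e * ENNReal.ofReal (Cf * (lam : ℝ) ^ 2)
        + e * ENNReal.ofReal (Cf * (lam : ℝ) ^ 2)
        + e * ENNReal.ofReal (Cf * (lam : ℝ) ^ 2)
        + ENNReal.ofReal (Cf * (lam : ℝ) ^ 3)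
        ≤ (ENNReal.ofReal Cf * ((μn : ℝ≥0∞)) ^ 3) + (ENNReal.ofReal Cf * ((μn : ℝ≥0∞)) ^ 3)
          + (ENNReal.ofReal Cf * ((μn : ℝ≥0∞)) ^ 3) + (ENNReal.ofReal Cf * ((μn : ℝ≥0∞)) ^ 3)
          + (ENNReal.ofReal Cf * ((μn : ℝ≥0∞)) ^ 3) + (ENNReal.ofReal Cf * ((μn : ℝ≥0∞)) ^ 3)
          + (ENNReal.ofReal Cf * ((μn : ℝ≥0∞)) ^ 3) + (ENNReal.ofReal Cf * ((μn : ℝ≥0∞)) ^ 3) := by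
          gcongr <;> assumption
      _ = (ENNReal.ofReal Cf * ((μn : ℝ≥0∞)) ^ 3) * 8 := by ring
  calc (∫⁻ x in Icc (0 : Fin 3 → ℝ) (fun _ => 2 * Real.pi), ENNReal.ofReal |f x * g x|)
      ≤ ∑ z : Fin 3 → Fin μn, ∫⁻ x in Icc (fun i => L * ((z i : ℕ) : ℝ))
          (fun i => L * ((z i : ℕ) : ℝ) + L), ENNReal.ofReal |f x * g x| := step1
    _ ≤ ∑ z : Fin 3 → Fin μn, Bz z * Ig0 := Finset.sum_le_sum fun z _ => step2 z
    _ = (∑ z : Fin 3 → Fin μn, Bz z) * Ig0 := by rw [Finset.sum_mul]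
    _ ≤ (ENNReal.ofReal (8 * Cf) * ((μn : ℝ≥0∞)) ^ 3) * Ig0 := mul_le_mul_left hK _
    _ = ENNReal.ofReal (8 * Cf) * (((μn : ℝ≥0∞)) ^ 3 * Ig0) := by ring
    _ ≤ ENNReal.ofReal (8 * Cf) *
          ∫⁻ x in Icc (0 : Fin 3 → ℝ) (fun _ => 2 * Real.pi), ENNReal.ofReal |g x| :=
        mul_le_mul_right hγ _

end
end Decoupling


/-- **`Lᵖ` decoupling.**  For every `N_dec ≥ 1` there is a constant `C > 0` such that:
whenever `1 ≤ λ ≤ μ` are integers with `λ^(N_dec+4) ≤ (μ/(2π√3))^(N_dec)`, `p ∈ {1,2}`,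
`f` is a smooth `(2πℤ)³`-periodic function with
`‖D^N f‖_{L^p(𝕋³)} ≤ C_f λ^N` for all `N ≤ N_dec + 4`, and `g` is a smooth
`(2π/μ)ℤ³`-periodic function, then `‖f g‖_{L^p(𝕋³)} ≤ C · C_f · ‖g‖_{L^p(𝕋³)}`. -/
theorem statement4 (Ndec : ℕ) (hNdec : 1 ≤ Ndec) :
    ∃ C : ℝ, 0 < C ∧
      ∀ (lam μ : ℕ), 1 ≤ lam → lam ≤ μ →
        (lam : ℝ) ^ (Ndec + 4) ≤ ((μ : ℝ) / (2 * Real.pi * Real.sqrt 3)) ^ Ndec →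
        ∀ p : ℝ≥0∞, p = 1 ∨ p = 2 →
          ∀ (f : (Fin 3 → ℝ) → ℝ) (Cf : ℝ), 0 < Cf →
            ContDiff ℝ (⊤ : ℕ∞) f →
            (∀ (x : Fin 3 → ℝ) (z : Fin 3 → ℤ),
              f (x + fun i => 2 * Real.pi * (z i : ℝ)) = f x) →
            (∀ N ≤ Ndec + 4,
              eLpNorm (fun x => ‖iteratedFDeriv ℝ N f x‖) p
                  (volume.restrict (Set.Icc (0 : Fin 3 → ℝ) fun _ => 2 * Real.pi))
                ≤ ENNReal.ofReal (Cf * (lam : ℝ) ^ N)) →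
            ∀ g : (Fin 3 → ℝ) → ℝ, ContDiff ℝ (⊤ : ℕ∞) g →
              (∀ (x : Fin 3 → ℝ) (z : Fin 3 → ℤ),
                g (x + fun i => 2 * Real.pi / (μ : ℝ) * (z i : ℝ)) = g x) →
              eLpNorm (fun x => f x * g x) p
                  (volume.restrict (Set.Icc (0 : Fin 3 → ℝ) fun _ => 2 * Real.pi))
                ≤ ENNReal.ofReal (C * Cf) *
                    eLpNorm g p
                      (volume.restrict (Set.Icc (0 : Fin 3 → ℝ) fun _ => 2 * Real.pi)) := by
  refine ⟨8, by norm_num, ?_⟩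
  intro lam μ hlam hlm _hpow p hp f Cf hCf hf _hfper hfN g hg hgper
  have hμ : 1 ≤ μ := le_trans hlam hlm
  rcases hp with hp1 | hp2
  · subst hp1
    have HN : ∀ N, N ≤ 3 →
        (∫⁻ x in Set.Icc (0 : Fin 3 → ℝ) (fun _ => 2 * Real.pi),
          ENNReal.ofReal ‖iteratedFDeriv ℝ N f x‖) ≤ ENNReal.ofReal (Cf * (lam : ℝ) ^ N) := by
      intro N hN
      have h := hfN N (by omega)
      rw [eLpNorm_one_eq_lintegral_enorm] at h
      simpa only [← ofReal_norm, Real.norm_eq_abs, abs_norm] using h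
    have hcore := Decoupling.core hμ hlam hlm hf hCf HN hg hgper
    rw [eLpNorm_one_eq_lintegral_enorm, eLpNorm_one_eq_lintegral_enorm]
    simpa only [← ofReal_norm, Real.norm_eq_abs] using hcore
  · subst hp2
    have h2ne : (2 : ℝ≥0∞) ≠ 0 := by norm_num
    have h2net : (2 : ℝ≥0∞) ≠ ⊤ := by norm_num
    have htr : (2 : ℝ≥0∞).toReal = 2 := by norm_num
    -- squared L² bounds on the derivatives of f
    have hL2 : ∀ N, N ≤ Ndec + 4 →
        (∫⁻ x in Set.Icc (0 : Fin 3 → ℝ) (fun _ => 2 * Real.pi),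
          (ENNReal.ofReal ‖iteratedFDeriv ℝ N f x‖) ^ (2:ℝ))
          ≤ (ENNReal.ofReal (Cf * (lam : ℝ) ^ N)) ^ (2:ℝ) := by
      intro N hN
      have h := hfN N hN
      rw [eLpNorm_eq_lintegral_rpow_enorm_toReal h2ne h2net, htr] at h
      have h2 := ENNReal.rpow_le_rpow h (by norm_num : (0:ℝ) ≤ 2)
      rw [one_div, ENNReal.rpow_inv_rpow (two_ne_zero)] at h2
      simpa only [← ofReal_norm, Real.norm_eq_abs, abs_norm] using h2
    have hfi : ∀ m : ℕ, Continuous (iteratedFDeriv ℝ m f) :=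
      fun m => hf.continuous_iteratedFDeriv (by exact_mod_cast le_top)
    have hconj : Real.HolderConjugate 2 2 := Real.HolderConjugate.two_two
    have hhold : ∀ i k : ℕ, i ≤ Ndec + 4 → k ≤ Ndec + 4 →
        (∫⁻ x in Set.Icc (0 : Fin 3 → ℝ) (fun _ => 2 * Real.pi),
          ENNReal.ofReal ‖iteratedFDeriv ℝ i f x‖ * ENNReal.ofReal ‖iteratedFDeriv ℝ k f x‖)
          ≤ ENNReal.ofReal (Cf * (lam : ℝ) ^ i) * ENNReal.ofReal (Cf * (lam : ℝ) ^ k) := by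
      intro i k hi hk
      have hmeasi : AEMeasurable (fun x => ENNReal.ofReal ‖iteratedFDeriv ℝ i f x‖)
          (volume.restrict (Set.Icc (0 : Fin 3 → ℝ) (fun _ => 2 * Real.pi))) :=
        ((ENNReal.continuous_ofReal.comp (hfi i).norm).measurable).aemeasurable
      have hmeask : AEMeasurable (fun x => ENNReal.ofReal ‖iteratedFDeriv ℝ k f x‖)
          (volume.restrict (Set.Icc (0 : Fin 3 → ℝ) (fun _ => 2 * Real.pi))) :=
        ((ENNReal.continuous_ofReal.comp (hfi k).norm).measurable).aemeasurable
      have hH := ENNReal.lintegral_mul_le_Lp_mul_Lq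
        (volume.restrict (Set.Icc (0 : Fin 3 → ℝ) (fun _ => 2 * Real.pi))) hconj hmeasi hmeask
      simp only [Pi.mul_apply] at hH
      refine hH.trans ?_
      have hbound : ∀ j : ℕ, j ≤ Ndec + 4 →
          (∫⁻ x in Set.Icc (0 : Fin 3 → ℝ) (fun _ => 2 * Real.pi),
            (ENNReal.ofReal ‖iteratedFDeriv ℝ j f x‖) ^ (2:ℝ)) ^ (1/(2:ℝ))
            ≤ ENNReal.ofReal (Cf * (lam : ℝ) ^ j) := by
        intro j hj
        have h1 := ENNReal.rpow_le_rpow (hL2 j hj) (by norm_num : (0:ℝ) ≤ 1/2)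
        rw [one_div] at h1 ⊢
        rwa [ENNReal.rpow_rpow_inv (two_ne_zero)] at h1
      exact mul_le_mul' (hbound i hi) (hbound k hk)
    -- L¹ bounds for f * f
    have hCf2 : (0:ℝ) < 8 * Cf ^ 2 := by positivity
    have HN2 : ∀ N, N ≤ 3 →
        (∫⁻ x in Set.Icc (0 : Fin 3 → ℝ) (fun _ => 2 * Real.pi),
          ENNReal.ofReal ‖iteratedFDeriv ℝ N (fun y => f y * f y) x‖)
          ≤ ENNReal.ofReal ((8 * Cf ^ 2) * (lam : ℝ) ^ N) := by
      intro N hN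
      have hpt : ∀ x, ‖iteratedFDeriv ℝ N (fun y => f y * f y) x‖ ≤
          ∑ i ∈ Finset.range (N + 1), (N.choose i : ℝ) * ‖iteratedFDeriv ℝ i f x‖ *
            ‖iteratedFDeriv ℝ (N - i) f x‖ :=
        fun x => norm_iteratedFDeriv_mul_le hf hf x (by exact_mod_cast le_top)
      calc (∫⁻ x in Set.Icc (0 : Fin 3 → ℝ) (fun _ => 2 * Real.pi),
            ENNReal.ofReal ‖iteratedFDeriv ℝ N (fun y => f y * f y) x‖)
          ≤ ∫⁻ x in Set.Icc (0 : Fin 3 → ℝ) (fun _ => 2 * Real.pi),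
              ∑ i ∈ Finset.range (N + 1), ENNReal.ofReal ((N.choose i : ℝ) *
                ‖iteratedFDeriv ℝ i f x‖ * ‖iteratedFDeriv ℝ (N - i) f x‖) := by
            refine lintegral_mono fun x => ?_
            refine le_trans (ENNReal.ofReal_le_ofReal (hpt x)) ?_
            rw [ENNReal.ofReal_sum_of_nonneg (fun i _ => by positivity)]
        _ = ∑ i ∈ Finset.range (N + 1), ∫⁻ x in Set.Icc (0 : Fin 3 → ℝ)
              (fun _ => 2 * Real.pi), ENNReal.ofReal ((N.choose i : ℝ) *
                ‖iteratedFDeriv ℝ i f x‖ * ‖iteratedFDeriv ℝ (N - i) f x‖) := by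
            refine lintegral_finset_sum _ fun i _ => ?_
            exact (ENNReal.continuous_ofReal.comp (((continuous_const.mul
              (hfi i).norm).mul (hfi (N - i)).norm))).measurable
        _ ≤ ∑ i ∈ Finset.range (N + 1),
              ENNReal.ofReal ((N.choose i : ℝ) * (Cf ^ 2 * (lam : ℝ) ^ N)) := by
            refine Finset.sum_le_sum fun i hi => ?_
            have hiN : i ≤ N := by
              have := Finset.mem_range.mp hi; omega
            have heq : ∀ x, ENNReal.ofReal ((N.choose i : ℝ) *
                ‖iteratedFDeriv ℝ i f x‖ * ‖iteratedFDeriv ℝ (N - i) f x‖)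
                = ENNReal.ofReal ((N.choose i : ℝ)) *
                  (ENNReal.ofReal ‖iteratedFDeriv ℝ i f x‖ *
                   ENNReal.ofReal ‖iteratedFDeriv ℝ (N - i) f x‖) := by
              intro x
              rw [← ENNReal.ofReal_mul (norm_nonneg _), ← ENNReal.ofReal_mul (by positivity)]
              ring_nf
            simp only [heq]
            have hmeasprod : Measurable fun x : Fin 3 → ℝ =>
                ENNReal.ofReal ‖iteratedFDeriv ℝ i f x‖ *
                ENNReal.ofReal ‖iteratedFDeriv ℝ (N - i) f x‖ := by
              refine Measurable.mul (f := fun x => ENNReal.ofReal ‖iteratedFDeriv ℝ i f x‖)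
                (g := fun x => ENNReal.ofReal ‖iteratedFDeriv ℝ (N - i) f x‖) ?_ ?_
              · exact (ENNReal.continuous_ofReal.comp (hfi i).norm).measurable
              · exact (ENNReal.continuous_ofReal.comp (hfi (N - i)).norm).measurable
            rw [lintegral_const_mul _ hmeasprod]
            have hch := hhold i (N - i) (by omega) (by omega)
            calc ENNReal.ofReal ((N.choose i : ℝ)) *
                  ∫⁻ x in Set.Icc (0 : Fin 3 → ℝ) (fun _ => 2 * Real.pi),
                    ENNReal.ofReal ‖iteratedFDeriv ℝ i f x‖ *
                    ENNReal.ofReal ‖iteratedFDeriv ℝ (N - i) f x‖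
                ≤ ENNReal.ofReal ((N.choose i : ℝ)) *
                  (ENNReal.ofReal (Cf * (lam : ℝ) ^ i) *
                   ENNReal.ofReal (Cf * (lam : ℝ) ^ (N - i))) := mul_le_mul_right hch _
              _ = ENNReal.ofReal ((N.choose i : ℝ) * (Cf ^ 2 * (lam : ℝ) ^ N)) := by
                  rw [← ENNReal.ofReal_mul (by positivity),
                    ← ENNReal.ofReal_mul (by positivity)]
                  congr 1
                  rw [show Cf * (lam : ℝ) ^ i * (Cf * (lam : ℝ) ^ (N - i))
                    = Cf ^ 2 * ((lam : ℝ) ^ i * (lam : ℝ) ^ (N - i)) by ring,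
                    ← pow_add, Nat.add_sub_cancel' hiN]
        _ ≤ ENNReal.ofReal ((8 * Cf ^ 2) * (lam : ℝ) ^ N) := by
            rw [← ENNReal.ofReal_sum_of_nonneg (fun i _ => by positivity)]
            apply ENNReal.ofReal_le_ofReal
            rw [← Finset.sum_mul]
            have hchs : (∑ i ∈ Finset.range (N + 1), (N.choose i : ℝ)) = (2:ℝ) ^ N := by
              rw [← Nat.cast_sum]
              rw [Nat.sum_range_choose]
              push_cast
              ring
            rw [hchs]
            have h2N : (2:ℝ) ^ N ≤ 8 := by
              calc (2:ℝ) ^ N ≤ 2 ^ 3 := by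
                    apply pow_le_pow_right₀ (by norm_num) hN
              _ = 8 := by norm_num
            have hnn : (0:ℝ) ≤ Cf ^ 2 * (lam:ℝ) ^ N := by positivity
            have hfin := mul_le_mul_of_nonneg_right h2N hnn
            nlinarith [hfin]
    have hgper2 : ∀ (x : Fin 3 → ℝ) (z : Fin 3 → ℤ),
        (fun y => g y * g y) (x + fun i => 2 * Real.pi / (μ : ℝ) * (z i : ℝ))
          = (fun y => g y * g y) x := by
      intro x z
      simp only
      rw [hgper x z]
    have hcore := Decoupling.core hμ hlam hlm (hf.mul hf) hCf2 HN2 (hg.mul hg) hgper2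
    -- convert to the L² statement
    rw [eLpNorm_eq_lintegral_rpow_enorm_toReal h2ne h2net, eLpNorm_eq_lintegral_rpow_enorm_toReal h2ne h2net,
      htr]
    have hptA : ∀ x : Fin 3 → ℝ, ‖f x * g x‖ₑ ^ (2:ℝ)
        = ENNReal.ofReal |f x * f x * (g x * g x)| := by
      intro x
      rw [← ofReal_norm, Real.norm_eq_abs,
        ENNReal.ofReal_rpow_of_nonneg (abs_nonneg _) (by norm_num)]
      congr 1
      rw [show ((2:ℝ) = ((2:ℕ):ℝ)) by norm_num, Real.rpow_natCast, sq_abs]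
      rw [abs_of_nonneg (by nlinarith [sq_nonneg (f x * g x)] : (0:ℝ) ≤ f x * f x * (g x * g x))]
      ring
    have hptB : ∀ x : Fin 3 → ℝ, ‖g x‖ₑ ^ (2:ℝ)
        = ENNReal.ofReal |g x * g x| := by
      intro x
      rw [← ofReal_norm, Real.norm_eq_abs,
        ENNReal.ofReal_rpow_of_nonneg (abs_nonneg _) (by norm_num)]
      congr 1
      rw [show ((2:ℝ) = ((2:ℕ):ℝ)) by norm_num, Real.rpow_natCast, sq_abs]
      rw [abs_of_nonneg (by nlinarith [sq_nonneg (g x)] : (0:ℝ) ≤ g x * g x)]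
      ring
    simp only [hptA, hptB]
    have hfinal : (∫⁻ x in Set.Icc (0 : Fin 3 → ℝ) (fun _ => 2 * Real.pi),
        ENNReal.ofReal |f x * f x * (g x * g x)|)
        ≤ (ENNReal.ofReal (8 * Cf)) ^ (2:ℕ) *
          ∫⁻ x in Set.Icc (0 : Fin 3 → ℝ) (fun _ => 2 * Real.pi),
            ENNReal.ofReal |g x * g x| := by
      refine le_trans (le_of_eq rfl) (hcore.trans (le_of_eq ?_))
      · congr 1
        rw [← ENNReal.ofReal_pow (by positivity)]
        congr 1
        ring
    calc (∫⁻ x in Set.Icc (0 : Fin 3 → ℝ) (fun _ => 2 * Real.pi),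
          ENNReal.ofReal |f x * f x * (g x * g x)|) ^ (1/(2:ℝ))
        ≤ ((ENNReal.ofReal (8 * Cf)) ^ (2:ℕ) *
            ∫⁻ x in Set.Icc (0 : Fin 3 → ℝ) (fun _ => 2 * Real.pi),
              ENNReal.ofReal |g x * g x|) ^ (1/(2:ℝ)) :=
          ENNReal.rpow_le_rpow hfinal (by norm_num)
      _ = ENNReal.ofReal (8 * Cf) *
            (∫⁻ x in Set.Icc (0 : Fin 3 → ℝ) (fun _ => 2 * Real.pi),
              ENNReal.ofReal |g x * g x|) ^ (1/(2:ℝ)) := by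
          rw [ENNReal.mul_rpow_of_nonneg _ _ (by norm_num : (0:ℝ) ≤ 1/2)]
          congr 1
          rw [← ENNReal.rpow_natCast (ENNReal.ofReal (8 * Cf)) 2]
          rw [← ENNReal.rpow_mul]
          norm_num
end

section
/- (Inverse divergence iteration step) Let n ≥ 2 and let ϱ, ϑ : 𝕋ⁿ → ℝ be smooth zero-mean periodic functions with ϱ = Δϑ. Let Φ : 𝕋ⁿ → 𝕋ⁿ be a smooth volume-preserving diffeomorphism (det ∇Φ ≡ 1) with ‖∇Φ − Id‖_{L^∞} ≤ 1/2, and set A = (∇Φ)^{−1}. Let G : 𝕋ⁿ → ℝⁿ be a smooth vector field. Define, with summation over repeated indices, R^{im} = (G^i A^m_ℓ + G^m A^i_ℓ − A^i_k A^m_k G^p ∂_p Φ^ℓ)(∂_ℓ ϑ)∘Φ − P δ_{im}, P = (2 G^m A^m_ℓ − A^m_k A^m_k G^p ∂_p Φ^ℓ)(∂_ℓ ϑ)∘Φ, and E^i = ( ∂_m(G^p A^i_k A^m_k − G^m A^i_k A^p_k) ∂_p Φ^ℓ − ∂_m G^i A^m_ℓ )(∂_ℓ ϑ)∘Φ. Then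 R is a symmetric matrix field and, for each i, G^i (ϱ∘Φ) = ∂_m R^{im} + ∂_i P + E^i. -/
open Matrix

attribute [local instance] Matrix.normedAddCommGroup Matrix.normedSpace

/-- Partial derivative in the `i`-th coordinate direction of a function on `ℝⁿ`. -/
noncomputable def pd {n : ℕ} (f : (Fin n → ℝ) → ℝ) (i : Fin n) (x : Fin n → ℝ) : ℝ :=
  fderiv ℝ f x (Pi.single i 1)

variable {n : ℕ}

lemma diffAt {f : (Fin n → ℝ) → ℝ} (hf : ContDiff ℝ (⊤:ℕ∞) f) (x : Fin n → ℝ) :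
    DifferentiableAt ℝ f x :=
  (hf.differentiable (by simp)).differentiableAt

lemma contDiff_pd {f : (Fin n → ℝ) → ℝ} (hf : ContDiff ℝ (⊤:ℕ∞) f) (i : Fin n) :
    ContDiff ℝ (⊤:ℕ∞) (pd f i) :=
  (hf.fderiv_right (m := (⊤:ℕ∞)) (by simp)).clm_apply contDiff_const

lemma pd_add {f g : (Fin n → ℝ) → ℝ} {x : Fin n → ℝ} (hf : DifferentiableAt ℝ f x)
    (hg : DifferentiableAt ℝ g x) (i : Fin n) :
    pd (fun y => f y + g y) i x = pd f i x + pd g i x := by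
  unfold pd; rw [fderiv_fun_add hf hg]; rfl

lemma pd_mul {f g : (Fin n → ℝ) → ℝ} {x : Fin n → ℝ} (hf : DifferentiableAt ℝ f x)
    (hg : DifferentiableAt ℝ g x) (i : Fin n) :
    pd (fun y => f y * g y) i x = pd f i x * g x + f x * pd g i x := by
  unfold pd; rw [fderiv_fun_mul hf hg]; simp; ring

lemma pd_const (c : ℝ) (i : Fin n) (x : Fin n → ℝ) : pd (fun _ => c) i x = 0 := by
  unfold pd; rw [fderiv_fun_const]; rfl

lemma pd_sub {f g : (Fin n → ℝ) → ℝ} {x : Fin n → ℝ} (hf : DifferentiableAt ℝ f x)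
    (hg : DifferentiableAt ℝ g x) (i : Fin n) :
    pd (fun y => f y - g y) i x = pd f i x - pd g i x := by
  unfold pd; rw [fderiv_fun_sub hf hg]; rfl

lemma pd_sum {ι : Type*} {s : Finset ι} {f : ι → (Fin n → ℝ) → ℝ} {x : Fin n → ℝ}
    (hf : ∀ j ∈ s, DifferentiableAt ℝ (f j) x) (i : Fin n) :
    pd (fun y => ∑ j ∈ s, f j y) i x = ∑ j ∈ s, pd (f j) i x := by
  unfold pd; rw [fderiv_fun_sum hf]; simp

lemma pd_const_mul {f : (Fin n → ℝ) → ℝ} {x : Fin n → ℝ} (hf : DifferentiableAt ℝ f x)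
    (c : ℝ) (i : Fin n) :
    pd (fun y => c * f y) i x = c * pd f i x := by
  unfold pd; rw [fderiv_const_mul hf]; rfl

lemma contDiffProd {ι : Type*} [DecidableEq ι] {s : Finset ι} {f : ι → (Fin n → ℝ) → ℝ}
    (hf : ∀ j ∈ s, ContDiff ℝ (⊤:ℕ∞) (f j)) :
    ContDiff ℝ (⊤:ℕ∞) (fun y => ∏ j ∈ s, f j y) := by
  induction s using Finset.induction with
  | empty => simpa using contDiff_const
  | insert a s hj ih =>
    simp only [Finset.prod_insert hj]
    exact (hf a (Finset.mem_insert_self a s)).mul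
      (ih fun j hjs => hf j (Finset.mem_insert_of_mem hjs))

lemma pd_prod {ι : Type*} [DecidableEq ι] {s : Finset ι} {f : ι → (Fin n → ℝ) → ℝ}
    {x : Fin n → ℝ} (hf : ∀ j ∈ s, ContDiff ℝ (⊤:ℕ∞) (f j)) (i : Fin n) :
    pd (fun y => ∏ j ∈ s, f j y) i x
      = ∑ j ∈ s, pd (f j) i x * ∏ k ∈ s.erase j, f k x := by
  induction s using Finset.induction with
  | empty =>
    simp only [Finset.prod_empty, Finset.sum_empty]
    unfold pd; rw [fderiv_fun_const]; rfl
  | insert a s hj ih =>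
    have hfa : DifferentiableAt ℝ (f a) x :=
      ((hf a (Finset.mem_insert_self a s)).differentiable (by simp)).differentiableAt
    have hfs : ContDiff ℝ (⊤:ℕ∞) (fun y => ∏ k ∈ s, f k y) :=
      contDiffProd fun j hjs => hf j (Finset.mem_insert_of_mem hjs)
    have hfsd : DifferentiableAt ℝ (fun y => ∏ k ∈ s, f k y) x :=
      (hfs.differentiable (by simp)).differentiableAt
    have key : pd (fun y => f a y * ∏ k ∈ s, f k y) i x
        = pd (f a) i x * ∏ k ∈ s, f k x + f a x * pd (fun y => ∏ k ∈ s, f k y) i x := by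
      unfold pd; rw [fderiv_fun_mul hfa hfsd]; simp; ring
    simp only [Finset.prod_insert hj]
    rw [key, ih fun j hjs => hf j (Finset.mem_insert_of_mem hjs)]
    rw [Finset.sum_insert hj, Finset.erase_insert hj, Finset.mul_sum]
    congr 1
    refine Finset.sum_congr rfl fun j hjs => ?_
    have hja : j ≠ a := fun h => hj (h ▸ hjs)
    rw [Finset.erase_insert_of_ne (Ne.symm hja),
      Finset.prod_insert (fun h => hj (Finset.mem_of_mem_erase h))]
    ring

lemma fderiv_apply_eq_sum {f : (Fin n → ℝ) → ℝ} {x : Fin n → ℝ} (v : Fin n → ℝ) :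
    fderiv ℝ f x v = ∑ ℓ, v ℓ * pd f ℓ x := by
  have hv : v = ∑ ℓ, (v ℓ) • (Pi.single ℓ 1 : Fin n → ℝ) := by
    ext k
    simp [Pi.single_apply, Finset.sum_ite_eq', mul_comm]
  conv_lhs => rw [hv]
  rw [map_sum]
  refine Finset.sum_congr rfl fun ℓ _ => ?_
  rw [(fderiv ℝ f x).map_smul]
  simp [pd, smul_eq_mul]

lemma pd_comp {f : (Fin n → ℝ) → ℝ} {Φ : (Fin n → ℝ) → (Fin n → ℝ)} {x : Fin n → ℝ}
    (hf : ContDiff ℝ (⊤:ℕ∞) f) (hΦ : ContDiff ℝ (⊤:ℕ∞) Φ) (m : Fin n) :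
    pd (fun y => f (Φ y)) m x
      = ∑ ℓ, pd (fun y => Φ y ℓ) m x * pd f ℓ (Φ x) := by
  have hfd : DifferentiableAt ℝ f (Φ x) := (hf.differentiable (by simp)).differentiableAt
  have hΦd : DifferentiableAt ℝ Φ x := (hΦ.differentiable (by simp)).differentiableAt
  have hcomp : pd (fun y => f (Φ y)) m x = fderiv ℝ f (Φ x) (fderiv ℝ Φ x (Pi.single m 1)) := by
    unfold pd
    rw [show (fun y => f (Φ y)) = f ∘ Φ from rfl, fderiv_comp x hfd hΦd]
    rfl
  rw [hcomp, fderiv_apply_eq_sum]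
  refine Finset.sum_congr rfl fun ℓ _ => ?_
  congr 1
  have : fderiv ℝ Φ x (Pi.single m 1) ℓ = fderiv ℝ (fun y => Φ y ℓ) x (Pi.single m 1) := by
    have hd : ∀ k, DifferentiableAt ℝ (fun y => Φ y k) x := fun k =>
      ((contDiff_pi.mp hΦ k).differentiable (by simp)).differentiableAt
    rw [show Φ = (fun y k => Φ y k) from rfl, fderiv_pi hd]
    rfl
  rw [this]; rfl

lemma pd_comm {f : (Fin n → ℝ) → ℝ} (hf : ContDiff ℝ (⊤:ℕ∞) f) (i j : Fin n) (x : Fin n → ℝ) :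
    pd (pd f i) j x = pd (pd f j) i x := by
  have hsym : IsSymmSndFDerivAt ℝ f x :=
    (hf.contDiffAt).isSymmSndFDerivAt (by rw [minSmoothness_of_isRCLikeNormedField]; exact WithTop.coe_le_coe.mpr le_top)
  have hfd : DifferentiableAt ℝ (fderiv ℝ f) x :=
    (((hf.fderiv_right (m := (⊤:ℕ∞)) (by simp))).differentiable (by simp)).differentiableAt
  have key : ∀ v w : Fin n → ℝ,
      fderiv ℝ (fun y => fderiv ℝ f y v) x w = fderiv ℝ (fderiv ℝ f) x w v := by
    intro v w
    rw [fderiv_clm_apply hfd (differentiableAt_const v)]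
    simp
  unfold pd
  rw [key, key]
  exact hsym _ _

lemma contDiffDet {M : (Fin n → ℝ) → Matrix (Fin n) (Fin n) ℝ}
    (hM : ∀ a b, ContDiff ℝ (⊤:ℕ∞) (fun y => M y a b)) :
    ContDiff ℝ (⊤:ℕ∞) (fun y => (M y).det) := by
  have : (fun y => (M y).det) = fun y => ∑ σ : Equiv.Perm (Fin n),
      (Equiv.Perm.sign σ : ℤ) * ∏ k, M y (σ k) k := by
    funext y; rw [Matrix.det_apply']
  rw [this]
  exact ContDiff.sum fun σ _ => contDiff_const.mul (contDiffProd fun k _ => hM (σ k) k)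

lemma contDiffAdj {M : (Fin n → ℝ) → Matrix (Fin n) (Fin n) ℝ}
    (hM : ∀ a b, ContDiff ℝ (⊤:ℕ∞) (fun y => M y a b)) (i j : Fin n) :
    ContDiff ℝ (⊤:ℕ∞) (fun y => (M y).adjugate i j) := by
  have : (fun y => (M y).adjugate i j)
      = fun y => ((M y).updateRow j (Pi.single i 1)).det := by
    funext y; rw [Matrix.adjugate_apply]
  rw [this]
  refine contDiffDet fun a b => ?_
  rcases eq_or_ne a j with h | h
  · subst h
    simpa using contDiff_const
  · have : (fun y => ((M y).updateRow j (Pi.single i 1)) a b) = fun y => M y a b := by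
      funext y; rw [Matrix.updateRow_apply, if_neg h]
    rw [this]; exact hM a b

/-- Jacobi's formula. -/
lemma pd_det {M : (Fin n → ℝ) → Matrix (Fin n) (Fin n) ℝ}
    (hM : ∀ a b, ContDiff ℝ (⊤:ℕ∞) (fun y => M y a b)) (b : Fin n) (x : Fin n → ℝ) :
    pd (fun y => (M y).det) b x
      = ∑ j, ∑ k, (M x).adjugate j k * pd (fun y => M y k j) b x := by
  have hdet : (fun y => (M y).det) = fun y => ∑ σ : Equiv.Perm (Fin n),
      ((Equiv.Perm.sign σ : ℤ) : ℝ) * ∏ k, M y (σ k) k := by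
    funext y; rw [Matrix.det_apply']
  have hdiff : ∀ a c, DifferentiableAt ℝ (fun y => M y a c) x := fun a c =>
    ((hM a c).differentiable (by simp)).differentiableAt
  rw [hdet]
  rw [pd_sum (fun σ _ => (DifferentiableAt.const_mul
    (((contDiffProd fun k _ => hM (σ k) k).differentiable (by simp)).differentiableAt) _)) b]
  have step : ∀ σ : Equiv.Perm (Fin n),
      pd (fun y => ((Equiv.Perm.sign σ : ℤ) : ℝ) * ∏ k, M y (σ k) k) b x
        = ((Equiv.Perm.sign σ : ℤ) : ℝ)
            * ∑ j, pd (fun y => M y (σ j) j) b x * ∏ k ∈ Finset.univ.erase j, M x (σ k) k := by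
    intro σ
    rw [pd_const_mul (((contDiffProd fun k _ => hM (σ k) k).differentiable
      (by simp)).differentiableAt)]
    rw [pd_prod (fun k _ => hM (σ k) k)]
  simp only [step]
  have swap : ∑ σ : Equiv.Perm (Fin n), ((Equiv.Perm.sign σ : ℤ) : ℝ)
        * ∑ j, pd (fun y => M y (σ j) j) b x * ∏ k ∈ Finset.univ.erase j, M x (σ k) k
      = ∑ j : Fin n, ∑ σ : Equiv.Perm (Fin n), ((Equiv.Perm.sign σ : ℤ) : ℝ)
        * (pd (fun y => M y (σ j) j) b x * ∏ k ∈ Finset.univ.erase j, M x (σ k) k) := by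
    simp only [Finset.mul_sum]
    exact Finset.sum_comm
  rw [swap]
  refine Finset.sum_congr rfl fun j _ => ?_
  set v : Fin n → ℝ := fun a => pd (fun y => M y a j) b x with hv
  have hD : ∑ σ : Equiv.Perm (Fin n), ((Equiv.Perm.sign σ : ℤ) : ℝ)
        * (pd (fun y => M y (σ j) j) b x * ∏ k ∈ Finset.univ.erase j, M x (σ k) k)
      = ((M x).updateCol j v).det := by
    rw [Matrix.det_apply']
    refine Finset.sum_congr rfl fun σ _ => ?_
    congr 1
    have : ∏ k, ((M x).updateCol j v) (σ k) k
        = ((M x).updateCol j v) (σ j) j * ∏ k ∈ Finset.univ.erase j,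
            ((M x).updateCol j v) (σ k) k :=
      (Finset.mul_prod_erase Finset.univ _ (Finset.mem_univ j)).symm
    rw [this]
    congr 1
    · rw [Matrix.updateCol_apply, if_pos rfl]
    · refine Finset.prod_congr rfl fun k hk => ?_
      rw [Matrix.updateCol_apply, if_neg (Finset.ne_of_mem_erase hk)]
  rw [hD, ← Matrix.cramer_apply, Matrix.cramer_eq_adjugate_mulVec]
  simp [Matrix.mulVec, dotProduct, hv]


lemma algB {n : ℕ} (a jm : Matrix (Fin n) (Fin n) ℝ) (g : Fin n → ℝ)
    (w : Fin n → Fin n → ℝ) (i : Fin n)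
    (hJA : ∀ j ℓ, (∑ m, jm j m * a m ℓ) = if j = ℓ then 1 else 0)
    (hw : ∀ j ℓ, w j ℓ = w ℓ j) :
    ∑ m, ∑ ℓ, (g i * a m ℓ + g m * a i ℓ
        - (∑ k, a i k * a m k) * (∑ p, g p * jm ℓ p)) * (∑ j, jm j m * w j ℓ)
      = g i * ∑ ℓ, w ℓ ℓ := by
  have S1 : ∑ m, ∑ ℓ, (g i * a m ℓ) * (∑ j, jm j m * w j ℓ) = g i * ∑ ℓ, w ℓ ℓ := by
    rw [Finset.sum_comm]
    rw [Finset.mul_sum]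
    refine Finset.sum_congr rfl fun ℓ _ => ?_
    have : ∀ m, (g i * a m ℓ) * (∑ j, jm j m * w j ℓ)
        = ∑ j, g i * (jm j m * a m ℓ) * w j ℓ := by
      intro m; rw [Finset.mul_sum]; refine Finset.sum_congr rfl fun j _ => ?_; ring
    simp only [this]
    rw [Finset.sum_comm]
    have : ∀ j, ∑ m, g i * (jm j m * a m ℓ) * w j ℓ
        = g i * (if j = ℓ then 1 else 0) * w j ℓ := by
      intro j
      rw [← hJA j ℓ]
      simp only [Finset.mul_sum, Finset.sum_mul]
    simp only [this]
    simp [Finset.sum_ite_eq']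
  have S2 : ∑ m, ∑ ℓ, (g m * a i ℓ) * (∑ j, jm j m * w j ℓ)
      = ∑ ℓ, ∑ j, a i ℓ * (∑ m, g m * jm j m) * w j ℓ := by
    rw [Finset.sum_comm]
    refine Finset.sum_congr rfl fun ℓ _ => ?_
    have : ∀ m, (g m * a i ℓ) * (∑ j, jm j m * w j ℓ)
        = ∑ j, a i ℓ * (g m * jm j m) * w j ℓ := by
      intro m; rw [Finset.mul_sum]; refine Finset.sum_congr rfl fun j _ => ?_; ring
    simp only [this]
    rw [Finset.sum_comm]
    refine Finset.sum_congr rfl fun j _ => ?_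
    simp only [Finset.mul_sum, Finset.sum_mul]
  have S3 : ∑ m, ∑ ℓ, ((∑ k, a i k * a m k) * (∑ p, g p * jm ℓ p)) * (∑ j, jm j m * w j ℓ)
      = ∑ ℓ, ∑ j, a i j * (∑ p, g p * jm ℓ p) * w j ℓ := by
    rw [Finset.sum_comm]
    refine Finset.sum_congr rfl fun ℓ _ => ?_
    have : ∀ m, ((∑ k, a i k * a m k) * (∑ p, g p * jm ℓ p)) * (∑ j, jm j m * w j ℓ)
        = ∑ j, (jm j m * (∑ k, a i k * a m k)) * (∑ p, g p * jm ℓ p) * w j ℓ := by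
      intro m; rw [Finset.mul_sum]; refine Finset.sum_congr rfl fun j _ => ?_; ring
    simp only [this]
    rw [Finset.sum_comm]
    refine Finset.sum_congr rfl fun j _ => ?_
    have key : ∑ m, jm j m * (∑ k, a i k * a m k) = a i j := by
      have : ∀ m, jm j m * (∑ k, a i k * a m k) = ∑ k, a i k * (jm j m * a m k) := by
        intro m; rw [Finset.mul_sum]; refine Finset.sum_congr rfl fun k _ => ?_; ring
      simp only [this]
      rw [Finset.sum_comm]
      have : ∀ k, ∑ m, a i k * (jm j m * a m k) = a i k * (if j = k then 1 else 0) := by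
        intro k
        rw [← hJA j k]
        simp only [Finset.mul_sum, Finset.sum_mul]
      simp only [this]
      simp [Finset.sum_ite_eq]
    rw [← key]
    rw [Finset.sum_mul, Finset.sum_mul]
  have S23 : ∑ ℓ, ∑ j, a i ℓ * (∑ m, g m * jm j m) * w j ℓ
      = ∑ ℓ, ∑ j, a i j * (∑ p, g p * jm ℓ p) * w j ℓ := by
    rw [Finset.sum_comm]
    refine Finset.sum_congr rfl fun ℓ _ => Finset.sum_congr rfl fun j _ => ?_
    rw [hw j ℓ]
  have expand : ∀ m ℓ, (g i * a m ℓ + g m * a i ℓ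
        - (∑ k, a i k * a m k) * (∑ p, g p * jm ℓ p)) * (∑ j, jm j m * w j ℓ)
      = (g i * a m ℓ) * (∑ j, jm j m * w j ℓ) + (g m * a i ℓ) * (∑ j, jm j m * w j ℓ)
        - ((∑ k, a i k * a m k) * (∑ p, g p * jm ℓ p)) * (∑ j, jm j m * w j ℓ) := by
    intro m ℓ; ring
  simp only [expand, Finset.sum_add_distrib, Finset.sum_sub_distrib]
  rw [S1, S2, S3, S23]
  ring

lemma sum_antisymm {n : ℕ} {F : Fin n → Fin n → ℝ} (h : ∀ m p, F m p = - F p m) :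
    ∑ m, ∑ p, F m p = 0 := by
  have h2 : ∑ m, ∑ p, F m p = - ∑ m, ∑ p, F m p := by
    calc ∑ m, ∑ p, F m p = ∑ p, ∑ m, F m p := Finset.sum_comm
      _ = ∑ p, ∑ m, - F p m := by
          exact Finset.sum_congr rfl fun p _ => Finset.sum_congr rfl fun m _ => h m p
      _ = - ∑ p, ∑ m, F p m := by simp [Finset.sum_neg_distrib]
  linarith


lemma algKey {n : ℕ} (Gi Aiℓ : ℝ) (Dgi Am DA Gv Bv Jv DAiℓ Dv : Fin n → ℝ)
    (Dg DB DJ : Fin n → Fin n → ℝ)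
    (hPi : (∑ m, DA m) = 0)
    (hDJsym : ∀ p m, DJ p m = DJ m p)
    (hAval : Aiℓ = ∑ p, Bv p * Jv p)
    (hDAiℓ : ∀ m, DAiℓ m = ∑ p, (DB p m * Jv p + Bv p * DJ p m))
    (hDv : ∀ m, Dv m = ∑ p, (Dg p m * Jv p + Gv p * DJ p m)) :
    (∑ m, (Dgi m * Am m + Gi * DA m + (Dg m m * Aiℓ + Gv m * DAiℓ m)
        - (DB m m * (∑ p, Gv p * Jv p) + Bv m * Dv m)))
      + ((∑ m, ∑ p, ((Dg p m * Bv m + Gv p * DB m m)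
            - (Dg m m * Bv p + Gv m * DB p m)) * Jv p)
          - ∑ m, Dgi m * Am m) = 0 := by
  have h0 : (∑ m, (Dgi m * Am m + Gi * DA m + (Dg m m * Aiℓ + Gv m * DAiℓ m)
        - (DB m m * (∑ p, Gv p * Jv p) + Bv m * Dv m)))
      = Gi * (∑ m, DA m) + ∑ m, (Dgi m * Am m + (Dg m m * Aiℓ + Gv m * DAiℓ m)
        - (DB m m * (∑ p, Gv p * Jv p) + Bv m * Dv m)) := by
    rw [Finset.mul_sum, ← Finset.sum_add_distrib]
    exact Finset.sum_congr rfl fun m _ => by ring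
  rw [h0, hPi, mul_zero, zero_add]
  have h1 : ∀ m, Dgi m * Am m + (Dg m m * Aiℓ + Gv m * DAiℓ m)
        - (DB m m * (∑ p, Gv p * Jv p) + Bv m * Dv m)
      = Dgi m * Am m + ∑ p, ((Dg m m * (Bv p * Jv p)
          + Gv m * (DB p m * Jv p + Bv p * DJ p m))
          - (DB m m * (Gv p * Jv p)
          + Bv m * (Dg p m * Jv p + Gv p * DJ p m))) := by
    intro m
    rw [hDAiℓ m, hDv m, hAval]
    rw [Finset.mul_sum _ _ (Dg m m), Finset.mul_sum _ _ (Gv m), Finset.mul_sum _ _ (DB m m),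
      Finset.mul_sum _ _ (Bv m)]
    rw [← Finset.sum_add_distrib, ← Finset.sum_add_distrib, add_sub_assoc,
      ← Finset.sum_sub_distrib]
  simp only [h1]
  rw [Finset.sum_add_distrib]
  have h3 : (∑ m, ∑ p, ((Dg m m * (Bv p * Jv p)
          + Gv m * (DB p m * Jv p + Bv p * DJ p m))
          - (DB m m * (Gv p * Jv p)
          + Bv m * (Dg p m * Jv p + Gv p * DJ p m))))
        + (∑ m, ∑ p, ((Dg p m * Bv m + Gv p * DB m m)
            - (Dg m m * Bv p + Gv m * DB p m)) * Jv p)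
      = ∑ m, ∑ p, (Gv m * Bv p * DJ p m - Bv m * Gv p * DJ p m) := by
    simp only [← Finset.sum_add_distrib]
    exact Finset.sum_congr rfl fun m _ => Finset.sum_congr rfl fun p _ => by ring
  have anti : (∑ m, ∑ p, (Gv m * Bv p * DJ p m - Bv m * Gv p * DJ p m)) = 0 := by
    refine sum_antisymm fun m p => ?_
    rw [hDJsym p m]
    ring
  linarith


lemma algInv {n : ℕ} (Dk av : Fin n → ℝ) (jm am : Matrix (Fin n) (Fin n) ℝ)
    (DJ : Fin n → Fin n → ℝ) (b : Fin n)
    (hrow : ∀ c, (∑ k, (Dk k * jm k c + av k * DJ k c)) = 0)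
    (hJA : ∀ j c, (∑ p, jm j p * am p c) = if j = c then 1 else 0) :
    Dk b = - ∑ c, (∑ k, av k * DJ k c) * am c b := by
  have h1 : Dk b = ∑ k, Dk k * (∑ p, jm k p * am p b) := by
    simp only [hJA]
    simp [Finset.sum_ite_eq, mul_ite]
  rw [h1]
  have h2 : (∑ k, Dk k * (∑ p, jm k p * am p b))
      = ∑ p, (∑ k, Dk k * jm k p) * am p b := by
    simp only [Finset.mul_sum, Finset.sum_mul]
    rw [Finset.sum_comm]
    exact Finset.sum_congr rfl fun p _ =>
      Finset.sum_congr rfl fun k _ => by ring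
  rw [h2]
  have h3 : ∀ p, (∑ k, Dk k * jm k p) = - ∑ k, av k * DJ k p := by
    intro p
    have := hrow p
    rw [Finset.sum_add_distrib] at this
    linarith
  simp only [h3]
  simp [Finset.sum_neg_distrib, neg_mul]

lemma algAB {n : ℕ} (a jm : Matrix (Fin n) (Fin n) ℝ)
    (hJA : ∀ j c, (∑ p, jm j p * a p c) = if j = c then 1 else 0) (i ℓ : Fin n) :
    (∑ p, (∑ k, a i k * a p k) * jm ℓ p) = a i ℓ := by
  have h1 : (∑ p, (∑ k, a i k * a p k) * jm ℓ p)
      = ∑ k, a i k * (∑ p, jm ℓ p * a p k) := by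
    simp only [Finset.mul_sum, Finset.sum_mul]
    rw [Finset.sum_comm]
    exact Finset.sum_congr rfl fun p _ =>
      Finset.sum_congr rfl fun k _ => by ring
  rw [h1]
  simp only [hJA]
  simp [Finset.sum_ite_eq', mul_ite]


/-- **Inverse divergence iteration step.**  For smooth zero-mean periodic `ϱ = Δϑ` on `𝕋ⁿ`,
a smooth volume-preserving diffeomorphism `Φ` of `𝕋ⁿ` with `‖∇Φ − Id‖_{L^∞} ≤ 1/2`,
`A := (∇Φ)⁻¹`, and a smooth vector field `G`, the matrix field `R` defined by
`R^{im} = (G^i A^m_ℓ + G^m A^i_ℓ − A^i_k A^m_k G^p ∂_p Φ^ℓ)(∂_ℓϑ)∘Φ − P δ_{im}` is symmetric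
and `G^i (ϱ∘Φ) = ∂_m R^{im} + ∂_i P + E^i`, with `P` and `E` as displayed. -/
theorem statement5 (n : ℕ) (hn : 2 ≤ n)
    (ϱ ϑ : (Fin n → ℝ) → ℝ)
    (hϱ : ContDiff ℝ (⊤ : ℕ∞) ϱ) (hϑ : ContDiff ℝ (⊤ : ℕ∞) ϑ)
    (hϱper : ∀ (x : Fin n → ℝ) (z : Fin n → ℤ),
      ϱ (x + fun i => 2 * Real.pi * (z i : ℝ)) = ϱ x)
    (hϑper : ∀ (x : Fin n → ℝ) (z : Fin n → ℤ),
      ϑ (x + fun i => 2 * Real.pi * (z i : ℝ)) = ϑ x)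
    (hϱmean : (∫ x in Set.Icc (0 : Fin n → ℝ) fun _ => 2 * Real.pi, ϱ x) = 0)
    (hϑmean : (∫ x in Set.Icc (0 : Fin n → ℝ) fun _ => 2 * Real.pi, ϑ x) = 0)
    (hlap : ∀ x, ϱ x = ∑ m, pd (pd ϑ m) m x)
    (Φ : (Fin n → ℝ) → (Fin n → ℝ)) (hΦ : ContDiff ℝ (⊤ : ℕ∞) Φ)
    (hΦper : ∀ (x : Fin n → ℝ) (z : Fin n → ℤ),
      Φ (x + fun i => 2 * Real.pi * (z i : ℝ)) = Φ x + fun i => 2 * Real.pi * (z i : ℝ))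
    (hΦbij : Function.Bijective Φ)
    -- the Jacobian matrix `(∇Φ)^ℓ_p = ∂_p Φ^ℓ`
    (J : (Fin n → ℝ) → Matrix (Fin n) (Fin n) ℝ)
    (hJ : ∀ x ℓ p, J x ℓ p = pd (fun y => Φ y ℓ) p x)
    -- volume preservation and closeness to the identity
    (hdet : ∀ x, (J x).det = 1)
    (hnear : ∀ x, ‖J x - 1‖ ≤ 1 / 2)
    -- `A = (∇Φ)⁻¹`
    (A : (Fin n → ℝ) → Matrix (Fin n) (Fin n) ℝ)
    (hA : ∀ x, A x = (J x)⁻¹)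
    (G : (Fin n → ℝ) → Fin n → ℝ) (hG : ContDiff ℝ (⊤ : ℕ∞) G)
    -- the pressure `P`
    (P : (Fin n → ℝ) → ℝ)
    (hP : ∀ x, P x = ∑ ℓ, (2 * (∑ m, G x m * A x m ℓ)
        - (∑ m, ∑ k, A x m k * A x m k) * ∑ p, G x p * J x ℓ p) * pd ϑ ℓ (Φ x))
    -- the stress `R`
    (R : (Fin n → ℝ) → Matrix (Fin n) (Fin n) ℝ)
    (hR : ∀ x i m, R x i m
        = (∑ ℓ, (G x i * A x m ℓ + G x m * A x i ℓ
            - (∑ k, A x i k * A x m k) * ∑ p, G x p * J x ℓ p) * pd ϑ ℓ (Φ x))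
          - P x * (if i = m then 1 else 0))
    -- the error term `E`
    (E : (Fin n → ℝ) → Fin n → ℝ)
    (hE : ∀ x i, E x i = ∑ ℓ, ((∑ m, ∑ p,
          pd (fun y => ∑ k, (G y p * A y i k * A y m k - G y m * A y i k * A y p k)) m x
            * J x ℓ p)
        - ∑ m, pd (fun y => G y i) m x * A x m ℓ) * pd ϑ ℓ (Φ x)) :
    (∀ x i m, R x i m = R x m i) ∧
      ∀ x i, G x i * ϱ (Φ x)
        = (∑ m, pd (fun y => R y i m) m x) + pd P i x + E x i := by
  classical
  -- basic smoothness facts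
  have hΦl : ∀ ℓ, ContDiff ℝ (⊤:ℕ∞) (fun y => Φ y ℓ) := fun ℓ => contDiff_pi.mp hΦ ℓ
  have hGs : ∀ p, ContDiff ℝ (⊤:ℕ∞) (fun y => G y p) := fun p => contDiff_pi.mp hG p
  have hJfun : ∀ k p, (fun y => J y k p) = pd (fun y => Φ y k) p :=
    fun k p => funext fun y => hJ y k p
  have hJs : ∀ k p, ContDiff ℝ (⊤:ℕ∞) (fun y => J y k p) := fun k p => by
    rw [hJfun k p]; exact contDiff_pd (hΦl k) p
  have hdetu : ∀ y, IsUnit (J y).det := fun y => by rw [hdet y]; exact isUnit_one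
  have hAadj : ∀ y, A y = (J y).adjugate := fun y => by
    rw [hA y, Matrix.inv_def, hdet y, Ring.inverse_one, one_smul]
  have hAs : ∀ a b, ContDiff ℝ (⊤:ℕ∞) (fun y => A y a b) := fun a b => by
    have h : (fun y => A y a b) = fun y => (J y).adjugate a b :=
      funext fun y => by rw [hAadj y]
    rw [h]; exact contDiffAdj hJs a b
  have hAJe : ∀ y a c, (∑ k, A y a k * J y k c) = if a = c then 1 else 0 := by
    intro y a c
    have h1 : A y * J y = 1 := by rw [hA y]; exact Matrix.nonsing_inv_mul (J y) (hdetu y)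
    have h2 : (A y * J y) a c = (1 : Matrix (Fin n) (Fin n) ℝ) a c := by rw [h1]
    simpa [Matrix.mul_apply, Matrix.one_apply] using h2
  have hJAe : ∀ y a c, (∑ k, J y a k * A y k c) = if a = c then 1 else 0 := by
    intro y a c
    have h1 : J y * A y = 1 := by rw [hA y]; exact Matrix.mul_nonsing_inv (J y) (hdetu y)
    have h2 : (J y * A y) a c = (1 : Matrix (Fin n) (Fin n) ℝ) a c := by rw [h1]
    simpa [Matrix.mul_apply, Matrix.one_apply] using h2
  refine ⟨?_, ?_⟩
  · -- symmetry of R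
    intro x i m
    rw [hR x i m, hR x m i]
    have h1 : (∑ k, A x i k * A x m k) = ∑ k, A x m k * A x i k :=
      Finset.sum_congr rfl fun k _ => mul_comm _ _
    have h2 : (if i = m then (1:ℝ) else 0) = (if m = i then 1 else 0) := by
      by_cases h : i = m
      · simp [h]
      · simp [h, Ne.symm h]
    rw [h1, h2]
    congr 1
    exact Finset.sum_congr rfl fun ℓ _ => by ring
  · -- the divergence identity
    intro x i
    have D : ∀ {f : (Fin n → ℝ) → ℝ}, ContDiff ℝ (⊤:ℕ∞) f → DifferentiableAt ℝ f x :=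
      fun h => diffAt h x
    -- local abbreviations
    obtain ⟨B, hB⟩ : ∃ B : (Fin n → ℝ) → Fin n → ℝ,
        ∀ y p, B y p = ∑ k, A y i k * A y p k := ⟨_, fun _ _ => rfl⟩
    have hBs : ∀ p, ContDiff ℝ (⊤:ℕ∞) (fun y => B y p) := fun p => by
      have h : (fun y => B y p) = fun y => ∑ k, A y i k * A y p k :=
        funext fun y => hB y p
      rw [h]; exact ContDiff.sum fun k _ => (hAs i k).mul (hAs p k)
    have hψs : ∀ ℓ, ContDiff ℝ (⊤:ℕ∞) (fun y => pd ϑ ℓ (Φ y)) := fun ℓ =>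
      (contDiff_pd hϑ ℓ).comp hΦ
    have hvs : ∀ ℓ, ContDiff ℝ (⊤:ℕ∞) (fun y => ∑ p, G y p * J y ℓ p) := fun ℓ =>
      ContDiff.sum fun p _ => (hGs p).mul (hJs ℓ p)
    obtain ⟨cF, hcF⟩ : ∃ cF : Fin n → Fin n → (Fin n → ℝ) → ℝ, ∀ m ℓ y,
        cF m ℓ y = G y i * A y m ℓ + G y m * A y i ℓ - B y m * ∑ p, G y p * J y ℓ p :=
      ⟨_, fun _ _ _ => rfl⟩
    have hcs : ∀ m ℓ, ContDiff ℝ (⊤:ℕ∞) (cF m ℓ) := fun m ℓ => by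
      have h : cF m ℓ = fun y => G y i * A y m ℓ + G y m * A y i ℓ
          - B y m * ∑ p, G y p * J y ℓ p := funext fun y => hcF m ℓ y
      rw [h]
      exact (((hGs i).mul (hAs m ℓ)).add ((hGs m).mul (hAs i ℓ))).sub
        ((hBs m).mul (hvs ℓ))
    have hPs : ContDiff ℝ (⊤:ℕ∞) P := by
      have h : P = fun y => ∑ ℓ, (2 * (∑ m, G y m * A y m ℓ)
          - (∑ m, ∑ k, A y m k * A y m k) * ∑ p, G y p * J y ℓ p) * pd ϑ ℓ (Φ y) :=
        funext hP
      rw [h]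
      exact ContDiff.sum fun ℓ _ =>
        (((contDiff_const.mul (ContDiff.sum fun m _ => (hGs m).mul (hAs m ℓ))).sub
          ((ContDiff.sum fun m _ => ContDiff.sum fun k _ => (hAs m k).mul (hAs m k)).mul
            (hvs ℓ))).mul (hψs ℓ))
    -- decomposition of R
    have hRfun : ∀ m, (fun y => R y i m)
        = fun y => (∑ ℓ, cF m ℓ y * pd ϑ ℓ (Φ y)) - (if i = m then (1:ℝ) else 0) * P y := by
      intro m; funext y; rw [hR y i m]
      have h : ∀ ℓ, cF m ℓ y = (G y i * A y m ℓ + G y m * A y i ℓ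
          - (∑ k, A y i k * A y m k) * ∑ p, G y p * J y ℓ p) := fun ℓ => by
        rw [hcF m ℓ y, hB y m]
      simp only [h]
      ring
    -- pd of R
    have pdR : ∀ m, pd (fun y => R y i m) m x
        = (∑ ℓ, (pd (cF m ℓ) m x * pd ϑ ℓ (Φ x)
            + cF m ℓ x * pd (fun y => pd ϑ ℓ (Φ y)) m x))
          - (if i = m then (1:ℝ) else 0) * pd P m x := by
      intro m
      rw [hRfun m]
      have h1 : pd (fun y => (∑ ℓ, cF m ℓ y * pd ϑ ℓ (Φ y))
            - (if i = m then (1:ℝ) else 0) * P y) m x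
          = pd (fun y => ∑ ℓ, cF m ℓ y * pd ϑ ℓ (Φ y)) m x
            - pd (fun y => (if i = m then (1:ℝ) else 0) * P y) m x :=
        pd_sub (D (ContDiff.sum fun ℓ _ => (hcs m ℓ).mul (hψs ℓ)))
          (D (contDiff_const.mul hPs)) m
      rw [h1]
      have h2 : pd (fun y => ∑ ℓ, cF m ℓ y * pd ϑ ℓ (Φ y)) m x
          = ∑ ℓ, pd (fun y => cF m ℓ y * pd ϑ ℓ (Φ y)) m x :=
        pd_sum (fun ℓ _ => D ((hcs m ℓ).mul (hψs ℓ))) m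
      rw [h2]
      have h3 : pd (fun y => (if i = m then (1:ℝ) else 0) * P y) m x
          = (if i = m then (1:ℝ) else 0) * pd P m x :=
        pd_const_mul (D hPs) _ m
      rw [h3]
      congr 1
      exact Finset.sum_congr rfl fun ℓ _ => pd_mul (D (hcs m ℓ)) (D (hψs ℓ)) m
    have hsum_ite : (∑ m, (if i = m then (1:ℝ) else 0) * pd P m x) = pd P i x := by
      simp [ite_mul, Finset.sum_ite_eq]
    have hRsum : (∑ m, pd (fun y => R y i m) m x)
        = ((∑ m, ∑ ℓ, pd (cF m ℓ) m x * pd ϑ ℓ (Φ x))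
            + (∑ m, ∑ ℓ, cF m ℓ x * pd (fun y => pd ϑ ℓ (Φ y)) m x)) - pd P i x := by
      simp only [pdR]
      rw [Finset.sum_sub_distrib, hsum_ite]
      congr 1
      rw [← Finset.sum_add_distrib]
      exact Finset.sum_congr rfl fun m _ => Finset.sum_add_distrib
    -- Part B : the main term
    have hψd : ∀ m ℓ, pd (fun y => pd ϑ ℓ (Φ y)) m x
        = ∑ j, J x j m * pd (pd ϑ ℓ) j (Φ x) := by
      intro m ℓ
      rw [pd_comp (contDiff_pd hϑ ℓ) hΦ m]
      exact Finset.sum_congr rfl fun j _ => by rw [← hJ x j m]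
    have hBpart : (∑ m, ∑ ℓ, cF m ℓ x * pd (fun y => pd ϑ ℓ (Φ y)) m x)
        = G x i * ϱ (Φ x) := by
      have h1 : ∀ m ℓ, cF m ℓ x * pd (fun y => pd ϑ ℓ (Φ y)) m x
          = (G x i * A x m ℓ + G x m * A x i ℓ
              - (∑ k, A x i k * A x m k) * ∑ p, G x p * J x ℓ p)
            * (∑ j, J x j m * pd (pd ϑ ℓ) j (Φ x)) := by
        intro m ℓ; rw [hψd m ℓ, hcF m ℓ x, hB x m]
      simp only [h1]
      rw [algB (A x) (J x) (G x) (fun j ℓ => pd (pd ϑ ℓ) j (Φ x)) i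
        (fun j ℓ => hJAe x j ℓ) (fun j ℓ => pd_comm hϑ ℓ j (Φ x))]
      rw [hlap (Φ x)]
    -- Clairaut for J entries
    have hJcomm : ∀ k c m, pd (fun y => J y k c) m x = pd (fun y => J y k m) c x := by
      intro k c m
      rw [hJfun k c, hJfun k m]
      exact pd_comm (hΦl k) c m x
    -- Jacobi / trace identity
    have htr : ∀ b, (∑ j, ∑ k, A x j k * pd (fun y => J y k j) b x) = 0 := by
      intro b
      have h0 : pd (fun y => (J y).det) b x = 0 := by
        have he : (fun y => (J y).det) = fun _ => (1:ℝ) := funext fun y => hdet y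
        rw [he, pd_const]
      rw [pd_det hJs b x] at h0
      calc (∑ j, ∑ k, A x j k * pd (fun y => J y k j) b x)
          = ∑ j, ∑ k, (J x).adjugate j k * pd (fun y => J y k j) b x := by
            refine Finset.sum_congr rfl fun j _ => Finset.sum_congr rfl fun k _ => ?_
            rw [hAadj x]
        _ = 0 := h0
    -- derivative of the entries of A
    have hdA : ∀ a b m, pd (fun y => A y a b) m x
        = - ∑ c, (∑ k, A x a k * pd (fun y => J y k c) m x) * A x c b := by
      intro a b m
      have hrow : ∀ c, (∑ k, (pd (fun y => A y a k) m x * J x k c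
          + A x a k * pd (fun y => J y k c) m x)) = 0 := by
        intro c
        have hfun : (fun y => ∑ k, A y a k * J y k c)
            = fun _ => (if a = c then (1:ℝ) else 0) := funext fun y => hAJe y a c
        have h1 : pd (fun y => ∑ k, A y a k * J y k c) m x
            = ∑ k, pd (fun y => A y a k * J y k c) m x :=
          pd_sum (fun k _ => D ((hAs a k).mul (hJs k c))) m
        have h2 : (∑ k, pd (fun y => A y a k * J y k c) m x) = 0 := by
          rw [← h1, hfun, pd_const]
        calc (∑ k, (pd (fun y => A y a k) m x * J x k c
              + A x a k * pd (fun y => J y k c) m x))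
            = ∑ k, pd (fun y => A y a k * J y k c) m x :=
              Finset.sum_congr rfl fun k _ => (pd_mul (D (hAs a k)) (D (hJs k c)) m).symm
          _ = 0 := h2
      exact algInv (fun k => pd (fun y => A y a k) m x) (fun k => A x a k)
        (J x) (A x) (fun k c => pd (fun y => J y k c) m x) b hrow (hJAe x)
    -- the Piola identity
    have hPiola : ∀ ℓ', (∑ m, pd (fun y => A y m ℓ') m x) = 0 := by
      intro ℓ'
      have h1 : ∀ m, pd (fun y => A y m ℓ') m x
          = - ∑ c, (∑ k, A x m k * pd (fun y => J y k c) m x) * A x c ℓ' :=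
        fun m => hdA m ℓ' m
      simp only [h1]
      have h3 : (∑ m, ∑ c, (∑ k, A x m k * pd (fun y => J y k c) m x) * A x c ℓ')
          = ∑ c, (∑ m, ∑ k, A x m k * pd (fun y => J y k m) c x) * A x c ℓ' := by
        rw [Finset.sum_comm]
        refine Finset.sum_congr rfl fun c _ => ?_
        rw [Finset.sum_mul]
        refine Finset.sum_congr rfl fun m _ => ?_
        congr 1
        exact Finset.sum_congr rfl fun k _ => by rw [hJcomm k c m]
      rw [Finset.sum_neg_distrib, h3]
      simp only [htr]
      simp
    -- A as B * J
    have hBfun : ∀ ℓ', (fun y => A y i ℓ') = fun y => ∑ p, B y p * J y ℓ' p := by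
      intro ℓ'; funext y
      calc A y i ℓ' = ∑ p, (∑ k, A y i k * A y p k) * J y ℓ' p :=
            (algAB (A y) (J y) (hJAe y) i ℓ').symm
        _ = ∑ p, B y p * J y ℓ' p :=
            Finset.sum_congr rfl fun p _ => by rw [hB y p]
    -- Part C : the error term
    have hq : ∀ p m, pd (fun y => ∑ k,
          (G y p * A y i k * A y m k - G y m * A y i k * A y p k)) m x
        = (pd (fun y => G y p) m x * B x m + G x p * pd (fun y => B y m) m x)
          - (pd (fun y => G y m) m x * B x p + G x m * pd (fun y => B y p) m x) := by
      intro p m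
      have e : (fun y => ∑ k, (G y p * A y i k * A y m k - G y m * A y i k * A y p k))
          = fun y => G y p * B y m - G y m * B y p := by
        funext y
        rw [Finset.sum_sub_distrib]
        congr 1
        · rw [hB y m, Finset.mul_sum]
          exact Finset.sum_congr rfl fun k _ => by ring
        · rw [hB y p, Finset.mul_sum]
          exact Finset.sum_congr rfl fun k _ => by ring
      rw [e]
      have h1 : pd (fun y => G y p * B y m - G y m * B y p) m x
          = pd (fun y => G y p * B y m) m x - pd (fun y => G y m * B y p) m x :=
        pd_sub (D ((hGs p).mul (hBs m))) (D ((hGs m).mul (hBs p))) m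
      rw [h1, pd_mul (D (hGs p)) (D (hBs m)) m, pd_mul (D (hGs m)) (D (hBs p)) m]
    have hkeyfinal : (∑ m, ∑ ℓ, pd (cF m ℓ) m x * pd ϑ ℓ (Φ x)) + E x i = 0 := by
      have hswap : (∑ m, ∑ ℓ, pd (cF m ℓ) m x * pd ϑ ℓ (Φ x))
          = ∑ ℓ, (∑ m, pd (cF m ℓ) m x) * pd ϑ ℓ (Φ x) := by
        rw [Finset.sum_comm]
        exact Finset.sum_congr rfl fun ℓ _ => (Finset.sum_mul _ _ _).symm
      rw [hswap, hE x i, ← Finset.sum_add_distrib]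
      refine Finset.sum_eq_zero fun ℓ _ => ?_
      -- per ℓ identities
      have hDv : ∀ m, pd (fun y => ∑ p, G y p * J y ℓ p) m x
          = ∑ p, (pd (fun y => G y p) m x * J x ℓ p
              + G x p * pd (fun y => J y ℓ p) m x) := by
        intro m
        have h1 : pd (fun y => ∑ p, G y p * J y ℓ p) m x
            = ∑ p, pd (fun y => G y p * J y ℓ p) m x :=
          pd_sum (fun p _ => D ((hGs p).mul (hJs ℓ p))) m
        rw [h1]
        exact Finset.sum_congr rfl fun p _ => pd_mul (D (hGs p)) (D (hJs ℓ p)) m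
      have hDA : ∀ m, pd (fun y => A y i ℓ) m x
          = ∑ p, (pd (fun y => B y p) m x * J x ℓ p
              + B x p * pd (fun y => J y ℓ p) m x) := by
        intro m
        rw [hBfun ℓ]
        have h1 : pd (fun y => ∑ p, B y p * J y ℓ p) m x
            = ∑ p, pd (fun y => B y p * J y ℓ p) m x :=
          pd_sum (fun p _ => D ((hBs p).mul (hJs ℓ p))) m
        rw [h1]
        exact Finset.sum_congr rfl fun p _ => pd_mul (D (hBs p)) (D (hJs ℓ p)) m
      have hAvalue : A x i ℓ = ∑ p, B x p * J x ℓ p := congrFun (hBfun ℓ) x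
      have hc1 : ∀ m, pd (cF m ℓ) m x
          = pd (fun y => G y i) m x * A x m ℓ + G x i * pd (fun y => A y m ℓ) m x
            + (pd (fun y => G y m) m x * A x i ℓ + G x m * pd (fun y => A y i ℓ) m x)
            - (pd (fun y => B y m) m x * (∑ p, G x p * J x ℓ p)
              + B x m * pd (fun y => ∑ p, G y p * J y ℓ p) m x) := by
        intro m
        have e : cF m ℓ = fun y => (G y i * A y m ℓ + G y m * A y i ℓ)
            - B y m * ∑ p, G y p * J y ℓ p := funext fun y => hcF m ℓ y
        rw [e]
        have h1 : pd (fun y => (G y i * A y m ℓ + G y m * A y i ℓ)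
              - B y m * ∑ p, G y p * J y ℓ p) m x
            = pd (fun y => G y i * A y m ℓ + G y m * A y i ℓ) m x
              - pd (fun y => B y m * ∑ p, G y p * J y ℓ p) m x :=
          pd_sub (D (((hGs i).mul (hAs m ℓ)).add ((hGs m).mul (hAs i ℓ))))
            (D ((hBs m).mul (hvs ℓ))) m
        rw [h1]
        have h2 : pd (fun y => G y i * A y m ℓ + G y m * A y i ℓ) m x
            = pd (fun y => G y i * A y m ℓ) m x + pd (fun y => G y m * A y i ℓ) m x :=
          pd_add (D ((hGs i).mul (hAs m ℓ))) (D ((hGs m).mul (hAs i ℓ))) m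
        rw [h2, pd_mul (D (hGs i)) (D (hAs m ℓ)) m, pd_mul (D (hGs m)) (D (hAs i ℓ)) m,
          pd_mul (D (hBs m)) (D (hvs ℓ)) m]
      simp only [hc1, hq]
      rw [← add_mul]
      have key := algKey (G x i) (A x i ℓ)
        (fun m => pd (fun y => G y i) m x) (fun m => A x m ℓ)
        (fun m => pd (fun y => A y m ℓ) m x) (fun m => G x m) (fun m => B x m)
        (fun p => J x ℓ p) (fun m => pd (fun y => A y i ℓ) m x)
        (fun m => pd (fun y => ∑ p, G y p * J y ℓ p) m x)
        (fun p m => pd (fun y => G y p) m x) (fun p m => pd (fun y => B y p) m x)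
        (fun p m => pd (fun y => J y ℓ p) m x)
        (hPiola ℓ) (fun p m => hJcomm ℓ p m) hAvalue hDA hDv
      rw [key, zero_mul]
    -- conclusion
    rw [hRsum, hBpart]
    linarith [hkeyfinal]
end

section
/- (Constantin–E–Titi commutator identity) Let f, g : ℝⁿ → ℝ be continuous and bounded, and let φ : ℝⁿ → ℝ be continuous, compactly supported, with ∫_{ℝⁿ} φ = 1. Write f_φ = f ∗ φ and g_φ = g ∗ φ for the convolutions. Then for every x ∈ ℝⁿ: (fg) ∗ φ (x) = f_φ(x) g_φ(x) − (f(x) − f_φ(x))(g(x) − g_φ(x)) + r(x), where r(x) = ∫_{ℝⁿ} φ(y) (f(x − y) − f(x)) (g(x − y) − g(x)) dy. -/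
open MeasureTheory

/-- **Constantin–E–Titi commutator identity.**  For bounded continuous `f, g : ℝⁿ → ℝ` and a
continuous compactly supported mollifier `φ` with `∫ φ = 1`,
`(fg) ∗ φ (x) = (f∗φ)(x)(g∗φ)(x) − (f(x) − (f∗φ)(x))(g(x) − (g∗φ)(x)) + r(x)` where
`r(x) = ∫ φ(y)(f(x−y) − f(x))(g(x−y) − g(x)) dy`. -/
theorem statement13 (n : ℕ) (f g φ : (Fin n → ℝ) → ℝ)
    (hf : Continuous f) (hfb : ∃ M, ∀ x, |f x| ≤ M)
    (hg : Continuous g) (hgb : ∃ M, ∀ x, |g x| ≤ M)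
    (hφ : Continuous φ) (hφs : HasCompactSupport φ)
    (hφ1 : (∫ y, φ y) = 1) (x : Fin n → ℝ) :
    (∫ y, f (x - y) * g (x - y) * φ y)
      = (∫ y, f (x - y) * φ y) * (∫ y, g (x - y) * φ y)
        - (f x - ∫ y, f (x - y) * φ y) * (g x - ∫ y, g (x - y) * φ y)
        + ∫ y, φ y * (f (x - y) - f x) * (g (x - y) - g x) := by
  have hfc : Continuous fun y : Fin n → ℝ => f (x - y) := hf.comp (by continuity)
  have hgc : Continuous fun y : Fin n → ℝ => g (x - y) := hg.comp (by continuity)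
  have i0 : Integrable φ := hφ.integrable_of_hasCompactSupport hφs
  have i1 : Integrable fun y => f (x - y) * φ y :=
    (hfc.mul hφ).integrable_of_hasCompactSupport hφs.mul_left
  have i2 : Integrable fun y => g (x - y) * φ y :=
    (hgc.mul hφ).integrable_of_hasCompactSupport hφs.mul_left
  have i3 : Integrable fun y => f (x - y) * g (x - y) * φ y :=
    ((hfc.mul hgc).mul hφ).integrable_of_hasCompactSupport hφs.mul_left
  have hr : (∫ y, φ y * (f (x - y) - f x) * (g (x - y) - g x))
      = (∫ y, f (x - y) * g (x - y) * φ y) - f x * (∫ y, g (x - y) * φ y)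
        - g x * (∫ y, f (x - y) * φ y) + f x * g x := by
    have key : (fun y => φ y * (f (x - y) - f x) * (g (x - y) - g x))
        = fun y => (f (x - y) * g (x - y) * φ y - f x * (g (x - y) * φ y)
            - g x * (f (x - y) * φ y)) + (f x * g x) * φ y := by
      funext y; ring
    have j1 : Integrable fun y => f x * (g (x - y) * φ y) := i2.const_mul _
    have j2 : Integrable fun y => g x * (f (x - y) * φ y) := i1.const_mul _
    have j3 : Integrable fun y => f x * g x * φ y := i0.const_mul _
    have j12 : Integrable fun y => f (x - y) * g (x - y) * φ y - f x * (g (x - y) * φ y) :=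
      i3.sub j1
    have j123 : Integrable fun y => f (x - y) * g (x - y) * φ y - f x * (g (x - y) * φ y)
        - g x * (f (x - y) * φ y) := j12.sub j2
    rw [key, integral_add j123 j3, integral_sub j12 j2, integral_sub i3 j1,
      integral_const_mul, integral_const_mul, integral_const_mul, hφ1]
    ring
  rw [hr]; ring
end
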